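/- arXiv:0907.1116 — 5 statements merged into one kernel-verified Lean document; each statement's English description precedes it below -/
import Mathlib

section
/- Let Z be a standard normal random variable and let c > 0. Then (1/(−log(cε))) · Σ_{n≥1} (1/n) · P(|Z| > c ε √n) converges to 2 as ε → 0⁺. -/
/-!
With `t = c ε`, Tonelli turns the series into `E[H(|Z| / t)]`, where `H(r) = ∑_{1 ≤ m < r²} 1/m`
is a harmonic number with about `r²` terms, so `H(r) = 2 log r + O(1)`. Hence the series is
`2 log (1/t) + O(1)` for any law with `E[log⁺ |Z|] < ∞`: the upper bound is uniform, and the lower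
bound is taken on the event `|Z| > 1 / log (1/t)`, whose probability tends to `P(Z ≠ 0) = 1`.
-/

open MeasureTheory ProbabilityTheory Filter Real Topology
open scoped ENNReal NNReal

lemma harmonic_cast_nonneg (n : ℕ) : 0 ≤ (harmonic n : ℝ) :=
  (log_nonneg (by simp)).trans (log_add_one_le_harmonic n)

lemma sqrt_succ_lt_iff_lt_ceil {r : ℝ} (hr : 0 ≤ r) (n : ℕ) :
    √((n : ℝ) + 1) < r ↔ n < ⌈r ^ 2 - 1⌉₊ := by
  rw [Nat.lt_ceil, Real.sqrt_lt (by positivity) hr, lt_sub_iff_add_lt]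

lemma two_mul_log_le_harmonic_ceil (r : ℝ) : 2 * log r ≤ harmonic ⌈r ^ 2 - 1⌉₊ := by
  rcases eq_or_ne r 0 with rfl | hr
  · simpa using harmonic_cast_nonneg _
  calc 2 * log r = log (r ^ 2) := by rw [log_pow]; norm_num
    _ ≤ log ↑(⌈r ^ 2 - 1⌉₊ + 1) := by
      gcongr
      push_cast; linarith [Nat.le_ceil (r ^ 2 - 1)]
    _ ≤ harmonic ⌈r ^ 2 - 1⌉₊ := log_add_one_le_harmonic _

lemma harmonic_ceil_le_one_add_two_mul_posLog (r : ℝ) :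
    (harmonic ⌈r ^ 2 - 1⌉₊ : ℝ) ≤ 1 + 2 * log⁺ r := by
  set M := ⌈r ^ 2 - 1⌉₊
  rcases Nat.eq_zero_or_pos M with h0 | hpos
  · rw [h0, harmonic_zero, Rat.cast_zero]
    linarith [posLog_nonneg (x := r)]
  have hMr : (M : ℝ) ≤ r ^ 2 := by
    linarith [Nat.ceil_lt_add_one (show 0 ≤ r ^ 2 - 1 by linarith [Nat.lt_ceil.mp hpos])]
  calc (harmonic M : ℝ) ≤ 1 + log M := harmonic_le_one_add_log M
    _ ≤ 1 + log (r ^ 2) := by gcongr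
    _ = 1 + 2 * log r := by rw [log_pow]; norm_num
    _ ≤ 1 + 2 * log⁺ r := by gcongr; exact le_max_right _ _

lemma tsum_inv_succ_mul_indicator {t : ℝ} (ht : 0 < t) (x : ℝ) :
    ∑' n : ℕ, ((n : ℝ≥0∞) + 1)⁻¹ * {y : ℝ | t * √((n : ℝ) + 1) < |y|}.indicator 1 x
      = ENNReal.ofReal (harmonic ⌈(|x| / t) ^ 2 - 1⌉₊) := by
  set M := ⌈(|x| / t) ^ 2 - 1⌉₊
  have hmem (n : ℕ) : x ∈ {y : ℝ | t * √((n : ℝ) + 1) < |y|} ↔ n ∈ Finset.range M := by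
    rw [Set.mem_ofPred_eq, Finset.mem_range, ← lt_div_iff₀' ht,
      sqrt_succ_lt_iff_lt_ceil (by positivity)]
  rw [tsum_eq_sum (s := Finset.range M) fun n hn => by
      rw [Set.indicator_of_notMem (mt (hmem n).1 hn), mul_zero],
    harmonic, Rat.cast_sum, ENNReal.ofReal_sum_of_nonneg fun _ _ => by positivity]
  refine Finset.sum_congr rfl fun n hn => ?_
  rw [Set.indicator_of_mem ((hmem n).2 hn), Pi.one_apply, mul_one, Rat.cast_inv,
    ENNReal.ofReal_inv_of_pos (by positivity)]
  norm_cast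
  rw [ENNReal.ofReal_natCast]

noncomputable def harmonicTailSum (μ : Measure ℝ) (t : ℝ) : ℝ :=
  ∑' n : ℕ, (1 / ((n : ℝ) + 1)) * (μ {y | t * √((n : ℝ) + 1) < |y|}).toReal

lemma measurableSet_lt_abs (a : ℝ) : MeasurableSet {y : ℝ | a < |y|} :=
  measurableSet_lt measurable_const measurable_abs

lemma measurable_harmonic_ceil (t : ℝ) :
    Measurable fun x : ℝ => (harmonic ⌈(|x| / t) ^ 2 - 1⌉₊ : ℝ) :=
  (measurable_from_nat (f := fun n => (harmonic n : ℝ))).comp <| Nat.measurable_ceil.comp <|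
    ((measurable_abs.div_const t).pow_const 2).sub_const 1

lemma harmonicTailSum_eq_integral (μ : Measure ℝ) [IsFiniteMeasure μ] {t : ℝ} (ht : 0 < t) :
    harmonicTailSum μ t = ∫ x, (harmonic ⌈(|x| / t) ^ 2 - 1⌉₊ : ℝ) ∂μ := by
  have hind (n : ℕ) : Measurable ({y : ℝ | t * √((n : ℝ) + 1) < |y|}.indicator (1 : ℝ → ℝ≥0∞)) :=
    measurable_one.indicator (measurableSet_lt_abs _)
  rw [integral_eq_lintegral_of_nonneg_ae (ae_of_all _ fun _ => harmonic_cast_nonneg _)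
      (measurable_harmonic_ceil t).aestronglyMeasurable]
  simp_rw [← tsum_inv_succ_mul_indicator ht]
  rw [lintegral_tsum fun n => ((hind n).const_mul _).aemeasurable, harmonicTailSum,
    ENNReal.tsum_toReal_eq fun n => by
      rw [lintegral_const_mul _ (hind n), lintegral_indicator_one (measurableSet_lt_abs _)]
      exact ENNReal.mul_ne_top (by simp) (by simp)]
  refine tsum_congr fun n => ?_
  rw [lintegral_const_mul _ (hind n), lintegral_indicator_one (measurableSet_lt_abs _),
    ENNReal.toReal_mul, ENNReal.toReal_inv, one_div]
  norm_cast

section Bounds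

variable {μ : Measure ℝ}

lemma harmonic_ceil_le (t x : ℝ) :
    (harmonic ⌈(|x| / t) ^ 2 - 1⌉₊ : ℝ) ≤ 1 + 2 * log⁺ t⁻¹ + 2 * log⁺ x :=
  calc (harmonic ⌈(|x| / t) ^ 2 - 1⌉₊ : ℝ) ≤ 1 + 2 * log⁺ (|x| * t⁻¹) :=
        harmonic_ceil_le_one_add_two_mul_posLog _
    _ ≤ 1 + 2 * (log⁺ |x| + log⁺ t⁻¹) := by gcongr; exact posLog_mul
    _ = 1 + 2 * log⁺ t⁻¹ + 2 * log⁺ x := by rw [posLog_abs]; ring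

lemma integrable_harmonic_ceil [IsFiniteMeasure μ] (hlog : Integrable (fun x => log⁺ x) μ)
    (t : ℝ) : Integrable (fun x => (harmonic ⌈(|x| / t) ^ 2 - 1⌉₊ : ℝ)) μ :=
  ((integrable_const _).add (hlog.const_mul 2)).mono'
    (measurable_harmonic_ceil t).aestronglyMeasurable <| ae_of_all _ fun x => by
      rw [norm_of_nonneg (harmonic_cast_nonneg _)]
      exact harmonic_ceil_le t x

lemma harmonicTailSum_le [IsProbabilityMeasure μ] (hlog : Integrable (fun x => log⁺ x) μ)
    {t : ℝ} (ht : 0 < t) : harmonicTailSum μ t ≤ 1 + 2 * log⁺ t⁻¹ + 2 * ∫ x, log⁺ x ∂μ := by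
  rw [harmonicTailSum_eq_integral μ ht]
  calc ∫ x, (harmonic ⌈(|x| / t) ^ 2 - 1⌉₊ : ℝ) ∂μ
      ≤ ∫ x, (1 + 2 * log⁺ t⁻¹ + 2 * log⁺ x) ∂μ :=
        integral_mono (integrable_harmonic_ceil hlog t)
          ((integrable_const _).add (hlog.const_mul 2)) (harmonic_ceil_le t)
    _ = 1 + 2 * log⁺ t⁻¹ + 2 * ∫ x, log⁺ x ∂μ := by
      rw [integral_add (integrable_const _) (hlog.const_mul 2), integral_const_mul]
      simp

lemma le_harmonicTailSum [IsFiniteMeasure μ] (hlog : Integrable (fun x => log⁺ x) μ)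
    {t s : ℝ} (ht : 0 < t) (hs : 0 < s) :
    2 * (log s - log t) * (μ {y | s < |y|}).toReal ≤ harmonicTailSum μ t := by
  have hpt (x : ℝ) : {y : ℝ | s < |y|}.indicator (fun _ => 2 * (log s - log t)) x
      ≤ (harmonic ⌈(|x| / t) ^ 2 - 1⌉₊ : ℝ) := by
    by_cases hx : s < |x|
    · rw [Set.indicator_of_mem (show x ∈ {y : ℝ | s < |y|} from hx)]
      calc 2 * (log s - log t) ≤ 2 * log (|x| / t) := by
            rw [log_div (hs.trans hx).ne' ht.ne']
            gcongr
        _ ≤ _ := two_mul_log_le_harmonic_ceil _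
    · rw [Set.indicator_of_notMem (show x ∉ {y : ℝ | s < |y|} from hx)]
      exact harmonic_cast_nonneg _
  rw [harmonicTailSum_eq_integral μ ht, mul_comm, ← smul_eq_mul, ← measureReal_def,
    ← integral_indicator_const _ (measurableSet_lt_abs s)]
  exact integral_mono ((integrable_const _).indicator (measurableSet_lt_abs s))
    (integrable_harmonic_ceil hlog t) hpt

end Bounds

section Asymptotics

variable {μ : Measure ℝ} [IsProbabilityMeasure μ]

lemma tendsto_measure_lt_abs_nhdsGT_zero (h0 : μ {0} = 0) :
    Tendsto (fun r => (μ {y | r < |y|}).toReal) (𝓝[>] 0) (𝓝 1) := by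
  have hmeas (r : ℝ) : MeasurableSet {y : ℝ | |y| ≤ r} :=
    measurableSet_le measurable_abs measurable_const
  have hinter : ⋂ r > (0 : ℝ), {y : ℝ | |y| ≤ r} = {0} := by
    ext y
    simp only [Set.mem_iInter, Set.mem_ofPred_eq, Set.mem_singleton_iff]
    refine ⟨fun h => abs_nonpos_iff.mp (le_of_forall_pos_le_add fun r hr => ?_), ?_⟩
    · simpa using h r hr
    · rintro rfl r hr
      simpa using hr.le
  have hsmall : Tendsto (fun r => μ {y : ℝ | |y| ≤ r}) (𝓝[>] 0) (𝓝 0) := by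
    have := tendsto_measure_biInter_gt (μ := μ) (fun r _ => (hmeas r).nullMeasurableSet)
      (fun _ _ _ hij _ hy => le_trans hy hij) ⟨1, one_pos, measure_ne_top _ _⟩
    rwa [hinter, h0] at this
  have hcompl (r : ℝ) : (μ {y | r < |y|}).toReal = 1 - (μ {y : ℝ | |y| ≤ r}).toReal := by
    rw [← measureReal_def, ← measureReal_def, ← probReal_compl_eq_one_sub (hmeas r)]
    simp only [Set.compl_ofPred, not_le]
  simp_rw [hcompl]
  simpa using ((ENNReal.tendsto_toReal ENNReal.zero_ne_top).comp hsmall).const_sub 1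

variable (hlog : Integrable (fun x => log⁺ x) μ)
include hlog

lemma le_inv_neg_log_mul_harmonicTailSum {t : ℝ} (ht0 : 0 < t) (ht1 : t < 1) :
    2 * (1 - log (-log t) / (-log t)) * (μ {y | (-log t)⁻¹ < |y|}).toReal
      ≤ 1 / (-log t) * harmonicTailSum μ t := by
  have hL : 0 < -log t := neg_pos.mpr (log_neg ht0 ht1)
  have hne : log t ≠ 0 := (log_neg ht0 ht1).ne
  have h := le_harmonicTailSum hlog ht0 (inv_pos.mpr hL)
  rw [log_inv] at h
  calc 2 * (1 - log (-log t) / (-log t)) * (μ {y | (-log t)⁻¹ < |y|}).toReal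
      = 1 / (-log t) * (2 * (-log (-log t) - log t) * (μ {y | (-log t)⁻¹ < |y|}).toReal) := by
        field_simp
        ring
    _ ≤ 1 / (-log t) * harmonicTailSum μ t := by gcongr

lemma inv_neg_log_mul_harmonicTailSum_le {t : ℝ} (ht0 : 0 < t) (ht1 : t < 1) :
    1 / (-log t) * harmonicTailSum μ t ≤ 2 + (1 + 2 * ∫ x, log⁺ x ∂μ) / (-log t) := by
  have hL : 0 < -log t := neg_pos.mpr (log_neg ht0 ht1)
  have hne : log t ≠ 0 := (log_neg ht0 ht1).ne
  have h := harmonicTailSum_le hlog ht0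
  rw [posLog_eq_log (by rw [abs_inv, abs_of_pos ht0]; exact one_le_inv_iff₀.mpr ⟨ht0, ht1.le⟩),
    log_inv] at h
  calc 1 / (-log t) * harmonicTailSum μ t
      ≤ 1 / (-log t) * (1 + 2 * -log t + 2 * ∫ x, log⁺ x ∂μ) := by gcongr
    _ = 2 + (1 + 2 * ∫ x, log⁺ x ∂μ) / (-log t) := by
        field_simp
        ring

theorem tendsto_inv_neg_log_mul_harmonicTailSum (h0 : μ {0} = 0) :
    Tendsto (fun t => 1 / (-log t) * harmonicTailSum μ t) (𝓝[>] 0) (𝓝 2) := by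
  have hL : Tendsto (fun t : ℝ => -log t) (𝓝[>] 0) atTop :=
    tendsto_neg_atBot_atTop.comp tendsto_log_nhdsGT_zero
  have hlower : Tendsto (fun t => 2 * (1 - log (-log t) / (-log t)) *
      (μ {y | (-log t)⁻¹ < |y|}).toReal) (𝓝[>] 0) (𝓝 2) := by
    have hratio := isLittleO_log_id_atTop.tendsto_div_nhds_zero.comp hL
    have hprob := (tendsto_measure_lt_abs_nhdsGT_zero h0).comp
      (tendsto_inv_atTop_nhdsGT_zero.comp hL)
    simpa using (((tendsto_const_nhds (x := (1 : ℝ))).sub hratio).const_mul 2).mul hprob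
  have hupper : Tendsto (fun t => 2 + (1 + 2 * ∫ x, log⁺ x ∂μ) / (-log t)) (𝓝[>] 0) (𝓝 2) := by
    simpa using (tendsto_const_nhds.div_atTop hL).const_add 2
  have hunit : ∀ᶠ t in 𝓝[>] (0 : ℝ), t ∈ Set.Ioo 0 1 := Ioo_mem_nhdsGT one_pos
  refine tendsto_of_tendsto_of_tendsto_of_le_of_le' hlower hupper ?_ ?_
  · filter_upwards [hunit] with t ht using le_inv_neg_log_mul_harmonicTailSum hlog ht.1 ht.2
  · filter_upwards [hunit] with t ht using inv_neg_log_mul_harmonicTailSum_le hlog ht.1 ht.2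

end Asymptotics

lemma posLog_le_abs (x : ℝ) : log⁺ x ≤ |x| :=
  max_le (abs_nonneg x) (by rw [← log_abs]; exact log_le_self (abs_nonneg x))

lemma integrable_posLog_gaussianReal (m : ℝ) (v : ℝ≥0) :
    Integrable (fun x => log⁺ x) (gaussianReal m v) :=
  ((memLp_id_gaussianReal 1).integrable le_rfl).norm.mono'
    continuous_posLog.measurable.aestronglyMeasurable
    (ae_of_all _ fun x => by
      rw [norm_of_nonneg posLog_nonneg]
      exact posLog_le_abs x)

theorem stmt_2_general {Ω : Type*} [MeasureSpace Ω]
    (Z : Ω → ℝ) (hZ : Measure.map Z (ℙ : Measure Ω) = gaussianReal 0 1)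
    (c : ℝ) (hc : 0 < c) :
    Tendsto
      (fun ε : ℝ =>
        (1 / (-Real.log (c * ε))) *
          ∑' n : ℕ, (1 / ((n : ℝ) + 1)) *
            (ℙ {ω | c * ε * Real.sqrt ((n : ℝ) + 1) < |Z ω|}).toReal)
      (𝓝[>] 0) (𝓝 2) := by
  have hZmeas : AEMeasurable Z ℙ := by
    by_contra h
    rw [Measure.map_of_not_aemeasurable h] at hZ
    exact IsProbabilityMeasure.ne_zero _ hZ.symm
  have hseries (ε : ℝ) : ∑' n : ℕ, (1 / ((n : ℝ) + 1)) *
      (ℙ {ω | c * ε * Real.sqrt ((n : ℝ) + 1) < |Z ω|}).toReal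
        = harmonicTailSum (gaussianReal 0 1) (c * ε) := by
    simp_rw [harmonicTailSum, ← hZ,
      Measure.map_apply_of_aemeasurable hZmeas (measurableSet_lt_abs _)]
    rfl
  have hscale : Tendsto (fun ε => c * ε) (𝓝[>] 0) (𝓝[>] 0) := by
    refine tendsto_nhdsWithin_iff.2 ⟨?_, ?_⟩
    · simpa using ((continuous_const_mul c).tendsto 0).mono_left nhdsWithin_le_nhds
    · filter_upwards [self_mem_nhdsWithin] with ε hε using mul_pos hc hε
  simpa only [hseries, Function.comp_def] using (tendsto_inv_neg_log_mul_harmonicTailSum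
    (integrable_posLog_gaussianReal 0 1)
    ((nullSingletonClass_gaussianReal one_ne_zero).measure_singleton 0)).comp hscale

theorem stmt_2 {Ω : Type*} [MeasureSpace Ω] [IsProbabilityMeasure (ℙ : Measure Ω)]
    (Z : Ω → ℝ) (hZ : Measure.map Z (ℙ : Measure Ω) = gaussianReal 0 1)
    (c : ℝ) (hc : 0 < c) :
    Tendsto
      (fun ε : ℝ =>
        (1 / (-Real.log (c * ε))) *
          ∑' n : ℕ, (1 / ((n : ℝ) + 1)) *
            (ℙ {ω | c * ε * Real.sqrt ((n : ℝ) + 1) < |Z ω|}).toReal)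
      (𝓝[>] 0) (𝓝 2) :=
  stmt_2_general Z hZ c hc
end

section
/- Let N be a standard normal random variable and c > 0. Then (cε)² · Σ_{n≥1} P(|N| > c ε √n) converges to 1 as ε → 0⁺. -/
open MeasureTheory ProbabilityTheory Filter Real Topology
open scoped ENNReal NNReal

/-!
With `Y = N² / (cε)²`, the event `{cε √(n+1) < |N|}` is `{n + 1 < Y}`, and summing indicators
gives `∑ₙ 1{n + 1 < Y} = ⌈Y - 1⌉₊ ∈ [Y - 1, Y]`. Taking expectations, the series lies between
`E Y - 1` and `E Y`, where `E Y = 1 / (cε)²` because `E N² = 1`. Hence `(cε)²` times the series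
lies in `[1 - (cε)², 1]`, and the claim follows by squeezing.
-/

lemma tsum_ite_natCast_add_one_lt (y : ℝ) :
    ∑' n : ℕ, (if (n : ℝ) + 1 < y then (1 : ℝ≥0∞) else 0) = ⌈y - 1⌉₊ := by
  have hiff (n : ℕ) : (n : ℝ) + 1 < y ↔ n ∈ Finset.range ⌈y - 1⌉₊ := by
    rw [Finset.mem_range, Nat.lt_ceil, lt_sub_iff_add_lt]
  simp_rw [hiff]
  rw [tsum_eq_sum (s := Finset.range ⌈y - 1⌉₊) (fun n hn => if_neg hn), Finset.sum_ite_mem]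
  simp

section TailSum

variable {α : Type*} [MeasurableSpace α] {μ : Measure α} {Y : α → ℝ}

lemma tsum_measure_natCast_add_one_lt (hY : AEMeasurable Y μ) :
    ∑' n : ℕ, μ {x | (n : ℝ) + 1 < Y x} = ∫⁻ x, (⌈Y x - 1⌉₊ : ℝ≥0∞) ∂μ := by
  have hs (n : ℕ) : NullMeasurableSet {x | (n : ℝ) + 1 < Y x} μ :=
    nullMeasurableSet_lt aemeasurable_const hY
  simp_rw [← lintegral_indicator_one₀ (hs _)]
  rw [← lintegral_tsum fun n => measurable_one.aemeasurable.indicator₀ (hs n)]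
  congr with x
  simp only [Set.indicator_apply, Set.mem_ofPred_eq, Pi.one_apply, tsum_ite_natCast_add_one_lt]

lemma tsum_measure_natCast_add_one_lt_le_lintegral (hY : AEMeasurable Y μ) (hY0 : 0 ≤ Y) :
    ∑' n : ℕ, μ {x | (n : ℝ) + 1 < Y x} ≤ ∫⁻ x, ENNReal.ofReal (Y x) ∂μ := by
  rw [tsum_measure_natCast_add_one_lt hY]
  refine lintegral_mono fun x => ?_
  rw [← ENNReal.ofReal_natCast]
  refine ENNReal.ofReal_le_ofReal ?_
  rcases le_or_gt (Y x) 1 with h | h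
  · simpa [Nat.ceil_eq_zero.2 (sub_nonpos.2 h)] using hY0 x
  · linarith [Nat.ceil_lt_add_one (sub_nonneg.2 h.le)]

lemma lintegral_le_measure_univ_add_tsum_measure_natCast_add_one_lt (hY : AEMeasurable Y μ) :
    ∫⁻ x, ENNReal.ofReal (Y x) ∂μ ≤ μ Set.univ + ∑' n : ℕ, μ {x | (n : ℝ) + 1 < Y x} := by
  rw [tsum_measure_natCast_add_one_lt hY, ← lintegral_one, ← lintegral_add_left measurable_const]
  refine lintegral_mono fun x => ?_
  rw [← ENNReal.ofReal_natCast, ← ENNReal.ofReal_one,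
    ← ENNReal.ofReal_add zero_le_one (by positivity)]
  exact ENNReal.ofReal_le_ofReal (by linarith [Nat.le_ceil (Y x - 1)])

lemma tsum_measureReal_natCast_add_one_lt_le_integral (hY : Integrable Y μ) (hY0 : 0 ≤ Y) :
    ∑' n : ℕ, μ.real {x | (n : ℝ) + 1 < Y x} ≤ ∫ x, Y x ∂μ := by
  have hle := tsum_measure_natCast_add_one_lt_le_lintegral hY.aemeasurable hY0
  have hfin := (hle.trans_lt hY.lintegral_lt_top).ne
  rw [integral_eq_lintegral_of_nonneg_ae (.of_forall hY0) hY.aestronglyMeasurable]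
  simp only [measureReal_def]
  rw [← ENNReal.tsum_toReal_eq (ENNReal.ne_top_of_tsum_ne_top hfin)]
  exact ENNReal.toReal_mono hY.lintegral_lt_top.ne hle

lemma integral_le_measureReal_univ_add_tsum_measureReal_natCast_add_one_lt [IsFiniteMeasure μ]
    (hY : Integrable Y μ) (hY0 : 0 ≤ Y) :
    ∫ x, Y x ∂μ ≤ μ.real Set.univ + ∑' n : ℕ, μ.real {x | (n : ℝ) + 1 < Y x} := by
  have hfin := ((tsum_measure_natCast_add_one_lt_le_lintegral hY.aemeasurable hY0).trans_lt
    hY.lintegral_lt_top).ne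
  rw [integral_eq_lintegral_of_nonneg_ae (.of_forall hY0) hY.aestronglyMeasurable]
  simp only [measureReal_def]
  rw [← ENNReal.tsum_toReal_eq (ENNReal.ne_top_of_tsum_ne_top hfin),
    ← ENNReal.toReal_add (measure_ne_top _ _) hfin]
  exact ENNReal.toReal_mono (ENNReal.add_ne_top.2 ⟨measure_ne_top _ _, hfin⟩)
    (lintegral_le_measure_univ_add_tsum_measure_natCast_add_one_lt hY.aemeasurable)

end TailSum

lemma mul_sqrt_lt_abs_iff {a r : ℝ} (ha : 0 < a) (hr : 0 ≤ r) (x : ℝ) :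
    a * √r < |x| ↔ r < x ^ 2 / a ^ 2 := by
  rw [← pow_lt_pow_iff_left₀ (by positivity) (abs_nonneg x) two_ne_zero,
    lt_div_iff₀ (by positivity), sq_abs, mul_pow, Real.sq_sqrt hr, mul_comm]

lemma setOf_mul_sqrt_lt_abs_eq {Ω : Type*} {X : Ω → ℝ} {a : ℝ} (ha : 0 < a) (n : ℕ) :
    {ω | a * √((n : ℝ) + 1) < |X ω|} = {ω | (n : ℝ) + 1 < X ω ^ 2 / a ^ 2} := by
  ext ω
  exact mul_sqrt_lt_abs_iff ha (by positivity) (X ω)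

section TailSumOfSquare

variable {Ω : Type*} [MeasurableSpace Ω] {P : Measure Ω} {X : Ω → ℝ} {a : ℝ}

lemma sq_mul_tsum_measureReal_mul_sqrt_lt_abs_le_integral_sq
    (hX : Integrable (fun ω => X ω ^ 2) P) (ha : 0 < a) :
    a ^ 2 * ∑' n : ℕ, P.real {ω | a * √((n : ℝ) + 1) < |X ω|} ≤ ∫ ω, X ω ^ 2 ∂P := by
  have h := tsum_measureReal_natCast_add_one_lt_le_integral (hX.div_const (a ^ 2))
    (fun ω => by positivity)
  simp_rw [← setOf_mul_sqrt_lt_abs_eq ha, integral_div] at h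
  rwa [le_div_iff₀ (by positivity), mul_comm] at h

lemma integral_sq_sub_le_sq_mul_tsum_measureReal_mul_sqrt_lt_abs [IsFiniteMeasure P]
    (hX : Integrable (fun ω => X ω ^ 2) P) (ha : 0 < a) :
    ∫ ω, X ω ^ 2 ∂P - a ^ 2 * P.real Set.univ ≤
      a ^ 2 * ∑' n : ℕ, P.real {ω | a * √((n : ℝ) + 1) < |X ω|} := by
  have h := integral_le_measureReal_univ_add_tsum_measureReal_natCast_add_one_lt
    (hX.div_const (a ^ 2)) (fun ω => by positivity)
  simp_rw [← setOf_mul_sqrt_lt_abs_eq ha, integral_div] at h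
  rw [div_le_iff₀ (by positivity)] at h
  linarith

end TailSumOfSquare

lemma integral_sq_of_hasLaw_gaussianReal {Ω : Type*} [MeasurableSpace Ω] {P : Measure Ω}
    {X : Ω → ℝ} {m : ℝ} {v : ℝ≥0} (hX : HasLaw X (gaussianReal m v) P) :
    ∫ ω, X ω ^ 2 ∂P = v + m ^ 2 := by
  have hlaw := hX.integral_comp (f := fun x => x ^ 2) (by fun_prop)
  have hvar := variance_eq_sub (memLp_id_gaussianReal (μ := m) (v := v) 2)
  simp only [variance_id_gaussianReal, Pi.pow_apply, id_eq, integral_id_gaussianReal] at hvar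
  simp only [Function.comp_def] at hlaw
  rw [hlaw]
  linarith


theorem stmt_8 {Ω : Type*} [MeasureSpace Ω] [IsProbabilityMeasure (ℙ : Measure Ω)]
    (N : Ω → ℝ) (hN : Measure.map N (ℙ : Measure Ω) = gaussianReal 0 1)
    (c : ℝ) (hc : 0 < c) :
    Tendsto
      (fun ε : ℝ =>
        (c * ε) ^ 2 *
          ∑' n : ℕ, (ℙ {ω | c * ε * Real.sqrt ((n : ℝ) + 1) < |N ω|}).toReal)
      (𝓝[>] 0) (𝓝 1) := by
  have hlaw : HasLaw N (gaussianReal 0 1) ℙ :=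
    ⟨.of_map_ne_zero (by simp [hN, IsProbabilityMeasure.ne_zero]), hN⟩
  have hsq : ∫ ω, N ω ^ 2 = 1 := by simpa using integral_sq_of_hasLaw_gaussianReal hlaw
  have hint : Integrable (fun ω => N ω ^ 2) := hlaw.hasGaussianLaw.memLp_two.integrable_sq
  have hlower : Tendsto (fun ε : ℝ => 1 - (c * ε) ^ 2) (𝓝[>] 0) (𝓝 1) :=
    ((by fun_prop : Continuous fun ε : ℝ => 1 - (c * ε) ^ 2).tendsto' 0 1 (by simp)).mono_left
      nhdsWithin_le_nhds
  refine tendsto_of_tendsto_of_tendsto_of_le_of_le' hlower tendsto_const_nhds ?_ ?_ <;>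
    filter_upwards [self_mem_nhdsWithin] with ε (hε : 0 < ε) <;>
    simp only [← measureReal_def]
  · simpa [hsq] using
      integral_sq_sub_le_sq_mul_tsum_measureReal_mul_sqrt_lt_abs hint (mul_pos hc hε)
  · simpa [hsq] using
      sq_mul_tsum_measureReal_mul_sqrt_lt_abs_le_integral_sq hint (mul_pos hc hε)
end

section
/- Let a ∈ (1/2, 1), let c > 0, and let Z be a real random variable whose law is absolutely continuous (Z has a density) and satisfies E Z² < ∞. Then (cε)^{1/a} · Σ_{n≥1} P(|Z| > c ε n^a) converges to E|Z|^{1/a} as ε → 0⁺. -/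
/-!
Put `Y = |Z| ^ (1 / a)` and `δ = (c ε) ^ (1 / a)`, so that `c ε n ^ a < |Z|` iff `δ n < Y`. The
sum is then `δ ∑ₙ G (δ n)` for the tail function `G t = P(Y > t)`: a right Riemann sum of the
antitone function `G`, hence squeezed between `∫₀^∞ G - δ G(0)` and `∫₀^∞ G`. By the layer cake
formula `∫₀^∞ G = E Y`, which is finite because `1 / a ≤ 2` and `E Z² < ∞`.
-/

open MeasureTheory ProbabilityTheory Filter Real Topology Set

section RiemannSum

variable {g : ℝ → ℝ} {δ : ℝ}

lemma Antitone.mul_sum_range_le_intervalIntegral (hg : Antitone g) (hδ : 0 < δ) (N : ℕ) :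
    δ * ∑ n ∈ Finset.range N, g (δ * (n + 1)) ≤ ∫ t in 0..δ * N, g t := by
  have h := (hg.comp_monotone (monotone_id.const_mul hδ.le)).antitoneOn
    (Icc 0 (0 + N)) |>.sum_le_integral
  rw [← mul_zero δ, ← intervalIntegral.smul_integral_comp_mul_left, smul_eq_mul]
  simpa using mul_le_mul_of_nonneg_left h hδ.le

lemma Antitone.intervalIntegral_le_mul_sum_range (hg : Antitone g) (hδ : 0 < δ) (N : ℕ) :
    ∫ t in 0..δ * N, g t ≤ δ * ∑ n ∈ Finset.range N, g (δ * n) := by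
  have h := (hg.comp_monotone (monotone_id.const_mul hδ.le)).antitoneOn
    (Icc 0 (0 + N)) |>.integral_le_sum
  rw [← mul_zero δ, ← intervalIntegral.smul_integral_comp_mul_left, smul_eq_mul]
  simpa using mul_le_mul_of_nonneg_left h hδ.le

variable (hg : Antitone g) (hg0 : 0 ≤ g) (hgi : IntegrableOn g (Ioi 0))
include hg hg0 hgi

lemma Antitone.mul_sum_range_le_integral_Ioi (hδ : 0 < δ) (N : ℕ) :
    ∑ n ∈ Finset.range N, δ * g (δ * (n + 1)) ≤ ∫ t in Ioi 0, g t := by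
  rw [← Finset.mul_sum]
  calc δ * ∑ n ∈ Finset.range N, g (δ * (n + 1)) ≤ ∫ t in 0..δ * N, g t :=
        hg.mul_sum_range_le_intervalIntegral hδ N
    _ ≤ ∫ t in Ioi 0, g t := by
        rw [intervalIntegral.integral_of_le (by positivity)]
        exact setIntegral_mono_set hgi (.of_forall hg0) Ioc_subset_Ioi_self.eventuallyLE

lemma Antitone.mul_tsum_le_integral_Ioi (hδ : 0 < δ) :
    δ * ∑' n : ℕ, g (δ * (n + 1)) ≤ ∫ t in Ioi 0, g t := by
  rw [← tsum_mul_left]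
  exact Real.tsum_le_of_sum_range_le (fun n => mul_nonneg hδ.le (hg0 _))
    (hg.mul_sum_range_le_integral_Ioi hg0 hgi hδ)

lemma Antitone.integral_Ioi_le_mul_tsum (hδ : 0 < δ) :
    ∫ t in Ioi 0, g t ≤ δ * g 0 + δ * ∑' n : ℕ, g (δ * (n + 1)) := by
  have hsum : Summable fun n : ℕ => g (δ * (n + 1)) :=
    (summable_mul_left_iff hδ.ne').1 <| summable_of_sum_range_le
      (fun n => mul_nonneg hδ.le (hg0 _)) (hg.mul_sum_range_le_integral_Ioi hg0 hgi hδ)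
  have hN : Tendsto (fun N : ℕ => δ * ((N + 1 : ℕ) : ℝ)) atTop atTop :=
    (tendsto_natCast_atTop_atTop.comp (tendsto_add_atTop_nat 1)).const_mul_atTop hδ
  refine le_of_tendsto' (intervalIntegral_tendsto_integral_Ioi 0 hgi hN) fun N => ?_
  calc ∫ t in 0..δ * ((N + 1 : ℕ) : ℝ), g t
      ≤ δ * ∑ n ∈ Finset.range (N + 1), g (δ * n) :=
        hg.intervalIntegral_le_mul_sum_range hδ (N + 1)
    _ = δ * g 0 + δ * ∑ n ∈ Finset.range N, g (δ * (n + 1)) := by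
        rw [Finset.sum_range_succ']; push_cast; ring_nf
    _ ≤ δ * g 0 + δ * ∑' n : ℕ, g (δ * (n + 1)) := by
        gcongr
        exact hsum.sum_le_tsum _ fun n _ => hg0 _

theorem Antitone.tendsto_mul_tsum_nhdsGT_zero :
    Tendsto (fun δ => δ * ∑' n : ℕ, g (δ * (n + 1))) (𝓝[>] 0) (𝓝 (∫ t in Ioi 0, g t)) := by
  have hlow : Tendsto (fun δ => (∫ t in Ioi 0, g t) - δ * g 0) (𝓝[>] 0)
      (𝓝 (∫ t in Ioi 0, g t)) := by
    refine tendsto_nhdsWithin_of_tendsto_nhds ?_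
    simpa using ((continuous_mul_const (g 0)).tendsto 0).const_sub (∫ t in Ioi 0, g t)
  refine tendsto_of_tendsto_of_tendsto_of_le_of_le' hlow tendsto_const_nhds ?_ ?_
  · filter_upwards [self_mem_nhdsWithin] with δ hδ
    linarith [hg.integral_Ioi_le_mul_tsum hg0 hgi hδ]
  · filter_upwards [self_mem_nhdsWithin] with δ hδ
    exact hg.mul_tsum_le_integral_Ioi hg0 hgi hδ

end RiemannSum

namespace MeasureTheory

variable {α : Type*} [MeasurableSpace α] {μ : Measure α} {Y : α → ℝ}

lemma antitone_measureReal_lt [IsFiniteMeasure μ] : Antitone fun t => μ.real {x | t < Y x} :=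
  fun _ _ hst => measureReal_mono fun _ hx => hst.trans_lt hx

lemma Integrable.integrableOn_measureReal_lt (hY : Integrable Y μ) (hY0 : 0 ≤ᵐ[μ] Y) :
    IntegrableOn (fun t => μ.real {x | t < Y x}) (Ioi 0) := by
  have hmeas : Measurable fun t => μ {x | t < Y x} :=
    Antitone.measurable fun _ _ hst => measure_mono fun _ hx => hst.trans_lt hx
  refine integrable_toReal_of_lintegral_ne_top hmeas.aemeasurable ?_
  rw [← lintegral_eq_lintegral_meas_lt μ hY0 hY.aemeasurable]
  exact hY.lintegral_lt_top.ne

theorem Integrable.tendsto_mul_tsum_measureReal_lt [IsFiniteMeasure μ] (hY : Integrable Y μ)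
    (hY0 : 0 ≤ᵐ[μ] Y) :
    Tendsto (fun δ => δ * ∑' n : ℕ, μ.real {x | δ * (n + 1) < Y x}) (𝓝[>] 0)
      (𝓝 (∫ x, Y x ∂μ)) := by
  rw [hY.integral_eq_integral_meas_lt hY0]
  exact antitone_measureReal_lt.tendsto_mul_tsum_nhdsGT_zero (fun _ => measureReal_nonneg)
    (hY.integrableOn_measureReal_lt hY0)

end MeasureTheory

lemma integrable_abs_rpow_of_integrable_sq {α : Type*} [MeasurableSpace α] {μ : Measure α}
    [IsFiniteMeasure μ] {f : α → ℝ} (hf : AEStronglyMeasurable f μ)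
    (hsq : Integrable (fun x => f x ^ 2) μ) {p : ℝ} (hp0 : 0 ≤ p) (hp2 : p ≤ 2) :
    Integrable (fun x => |f x| ^ p) μ := by
  have h := ((memLp_two_iff_integrable_sq hf).2 hsq).mono_exponent
    (p := ENNReal.ofReal p) (by simpa using ENNReal.ofReal_le_ofReal hp2)
  simpa [ENNReal.toReal_ofReal hp0] using h.integrable_norm_rpow'

lemma mul_rpow_lt_iff_rpow_one_div_mul_lt {a s u y : ℝ} (ha : 0 < a) (hs : 0 ≤ s) (hu : 0 ≤ u)
    (hy : 0 ≤ y) : s * u ^ a < y ↔ s ^ (1 / a) * u < y ^ (1 / a) := by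
  rw [← rpow_lt_rpow_iff (by positivity) hy (one_div_pos.2 ha), mul_rpow hs (rpow_nonneg hu a),
    ← rpow_mul hu, mul_one_div_cancel ha.ne', rpow_one]

theorem stmt_9_general {Ω : Type*} [MeasureSpace Ω] [IsProbabilityMeasure (ℙ : Measure Ω)]
    (a : ℝ) (ha0 : 1 / 2 < a) (c : ℝ) (hc : 0 < c)
    (Z : Ω → ℝ) (hZmeas : Measurable Z)
    (hZmom : Integrable (fun ω => (Z ω) ^ 2) (ℙ : Measure Ω)) :
    Tendsto
      (fun ε : ℝ =>
        (c * ε) ^ (1 / a) *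
          ∑' n : ℕ, (ℙ {ω | c * ε * ((n : ℝ) + 1) ^ a < |Z ω|}).toReal)
      (𝓝[>] 0) (𝓝 (∫ ω, |Z ω| ^ (1 / a) ∂(ℙ : Measure Ω))) := by
  have ha : 0 < a := by linarith
  have hp : 0 < 1 / a := one_div_pos.2 ha
  have hY := integrable_abs_rpow_of_integrable_sq hZmeas.aestronglyMeasurable hZmom hp.le
    ((div_le_iff₀ ha).2 (by linarith))
  have hδ : Tendsto (fun ε : ℝ => (c * ε) ^ (1 / a)) (𝓝[>] 0) (𝓝[>] 0) := by
    refine tendsto_nhdsWithin_iff.2 ⟨tendsto_nhdsWithin_of_tendsto_nhds ?_, ?_⟩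
    · simpa [ha.ne'] using
        ((continuous_const_mul c).rpow_const fun _ => Or.inr hp.le).tendsto 0
    · filter_upwards [self_mem_nhdsWithin] with ε hε using rpow_pos_of_pos (mul_pos hc hε) _
  refine ((hY.tendsto_mul_tsum_measureReal_lt (.of_forall fun ω => by positivity)).comp hδ).congr'
    ?_
  filter_upwards [self_mem_nhdsWithin] with ε (hε : 0 < ε)
  simp_rw [Function.comp_apply, Measure.real,
    mul_rpow_lt_iff_rpow_one_div_mul_lt ha (mul_pos hc hε).le (Nat.cast_add_one_pos _).le
      (abs_nonneg _)]

theorem stmt_9 {Ω : Type*} [MeasureSpace Ω] [IsProbabilityMeasure (ℙ : Measure Ω)]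
    (a : ℝ) (ha0 : 1 / 2 < a) (ha1 : a < 1) (c : ℝ) (hc : 0 < c)
    (Z : Ω → ℝ) (hZmeas : Measurable Z)
    (hZdens : (Measure.map Z (ℙ : Measure Ω)) ≪ (volume : Measure ℝ))
    (hZmom : Integrable (fun ω => (Z ω) ^ 2) (ℙ : Measure Ω)) :
    Tendsto
      (fun ε : ℝ =>
        (c * ε) ^ (1 / a) *
          ∑' n : ℕ, (ℙ {ω | c * ε * ((n : ℝ) + 1) ^ a < |Z ω|}).toReal)
      (𝓝[>] 0) (𝓝 (∫ ω, |Z ω| ^ (1 / a) ∂(ℙ : Measure Ω))) :=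
  stmt_9_general a ha0 c hc Z hZmeas hZmom
end

section
/- (Erdős converse to Hsu–Robbins) Let X₁, X₂, … be independent identically distributed real random variables and set S_n = X₁ + ⋯ + X_n. If Σ_{n≥1} P(|S_n| > ε n) < ∞ for every ε > 0, then E X₁² < ∞ and E X₁ = 0. -/
open MeasureTheory ProbabilityTheory Filter Real Topology Finset

/-!
Write `S n = X 0 + ⋯ + X (n - 1)`. Since `X n = S (n + 1) - S n`, the hypothesis makes the tails
`P(|X 0| > ε n)` summable for every `ε > 0`; being monotone in `n`, they are then `o(1/n)`.

For the second moment, fix `n` and `c = ε n`, and for `j < n` consider the event that `|X j| > c`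
while every other `|X i|` (`i < n`) is at most `c` and their sum is at most `c / 2`. These events
are pairwise disjoint and contained in `{|S n| > c / 2}`; by independence each has probability
`P(|X 0| > c) * (1 - o(1))`. Hence `n P(|X 0| > ε n) ≤ 2 P(|S n| > ε n / 2)` for large `n`,
which is summable, and this is exactly the summability criterion for `E (X 0)² < ∞`.

Finally, by the strong law `S n / n → E (X 0)` almost surely, while by Borel–Cantelli
`|S n| ≤ ε n` eventually almost surely, for every `ε > 0`; so `E (X 0) = 0`.
-/

theorem Antitone.tendsto_natCast_mul_of_summable {f : ℕ → ℝ} (hf : Antitone f)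
    (hs : Summable f) : Tendsto (fun n : ℕ => (n : ℝ) * f n) atTop (𝓝 0) := by
  have hnonneg : ∀ n, 0 ≤ f n := fun n => hf.le_of_tendsto hs.tendsto_atTop_zero n
  set tail : ℕ → ℝ := fun m => ∑' k, f (k + m)
  -- the `m` terms `f m, …, f (2m - 1)` of the tail from `m` all dominate `f (2m)`
  have hhalf : ∀ n : ℕ, (n : ℝ) * f n ≤ 2 * tail (n / 2) + f n := by
    intro n
    set m := n / 2
    have hm : m * f (2 * m) ≤ tail m := calc
      (m : ℝ) * f (2 * m) = ∑ k ∈ range m, f (2 * m) := by simp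
      _ ≤ ∑ k ∈ range m, f (k + m) :=
        sum_le_sum fun k hk => hf (by rw [mem_range] at hk; omega)
      _ ≤ tail m := ((summable_nat_add_iff m).2 hs).sum_le_tsum _ fun k _ => hnonneg _
    have hn : (n : ℝ) ≤ 2 * m + 1 := by exact_mod_cast (by omega : n ≤ 2 * m + 1)
    have hf2m : f n ≤ f (2 * m) := hf (by omega)
    nlinarith [hnonneg n]
  have htail : Tendsto (fun n => 2 * tail (n / 2) + f n) atTop (𝓝 0) := by
    simpa using (((tendsto_sum_nat_add f).comp
      (Nat.tendsto_div_const_atTop two_ne_zero)).const_mul 2).add hs.tendsto_atTop_zero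
  exact squeeze_zero (fun n => mul_nonneg n.cast_nonneg (hnonneg n)) hhalf htail

theorem pow_le_sum_range_ceil {t : ℝ} (ht : 0 ≤ t) {k : ℕ} (hk : k ≠ 0) :
    t ^ k ≤ ∑ n ∈ range ⌈t⌉₊, (((n : ℝ) + 1) ^ k - (n : ℝ) ^ k) := by
  have htel := sum_range_sub (fun n : ℕ => (n : ℝ) ^ k) ⌈t⌉₊
  push_cast [zero_pow hk, sub_zero] at htel
  exact htel ▸ pow_le_pow_left₀ ht (Nat.le_ceil t) k

theorem integrable_pow_of_summable_measureReal_lt_abs {Ω : Type*} [MeasurableSpace Ω]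
    {μ : Measure Ω} [IsFiniteMeasure μ] {f : Ω → ℝ} (hf : Measurable f) {k : ℕ} (hk : k ≠ 0)
    (h : Summable fun n : ℕ => (((n : ℝ) + 1) ^ k - (n : ℝ) ^ k) * μ.real {ω | n < |f ω|}) :
    Integrable (fun ω => f ω ^ k) μ := by
  set w : ℕ → ℝ := fun n => ((n : ℝ) + 1) ^ k - (n : ℝ) ^ k
  set s : ℕ → Set Ω := fun n => {ω | n < |f ω|}
  have hw : ∀ n, 0 ≤ w n := fun n =>
    sub_nonneg.2 (pow_le_pow_left₀ n.cast_nonneg (by linarith) k)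
  have hs : ∀ n, MeasurableSet (s n) := fun n => measurableSet_lt measurable_const hf.abs
  have hpoint :
      ∀ ω, ‖f ω ^ k‖ₑ ≤ ∑' n, (s n).indicator (fun _ => ENNReal.ofReal (w n)) ω := by
    intro ω
    calc ‖f ω ^ k‖ₑ = ENNReal.ofReal (|f ω| ^ k) := by
          rw [← abs_pow, Real.enorm_eq_ofReal_abs]
      _ ≤ ENNReal.ofReal (∑ n ∈ range ⌈|f ω|⌉₊, w n) :=
          ENNReal.ofReal_le_ofReal (pow_le_sum_range_ceil (abs_nonneg _) hk)
      _ = ∑ n ∈ range ⌈|f ω|⌉₊, (s n).indicator (fun _ => ENNReal.ofReal (w n)) ω := by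
          rw [ENNReal.ofReal_sum_of_nonneg fun n _ => hw n]
          exact sum_congr rfl fun n hn =>
            (Set.indicator_of_mem (Nat.lt_ceil.1 (mem_range.1 hn)) (fun _ => _)).symm
      _ ≤ _ := ENNReal.sum_le_tsum _
  refine ⟨(hf.pow_const k).aestronglyMeasurable, ?_⟩
  calc ∫⁻ ω, ‖f ω ^ k‖ₑ ∂μ
      ≤ ∫⁻ ω, ∑' n, (s n).indicator (fun _ => ENNReal.ofReal (w n)) ω ∂μ :=
        lintegral_mono hpoint
    _ = ∑' n, ENNReal.ofReal (w n * μ.real (s n)) := by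
        rw [lintegral_tsum fun n => (measurable_const.indicator (hs n)).aemeasurable]
        refine tsum_congr fun n => ?_
        rw [lintegral_indicator_const (hs n), ENNReal.ofReal_mul (hw n), ofReal_measureReal]
    _ = ENNReal.ofReal (∑' n, w n * μ.real (s n)) :=
        (ENNReal.ofReal_tsum_of_nonneg (fun n => mul_nonneg (hw n) measureReal_nonneg) h).symm
    _ < ⊤ := ENNReal.ofReal_lt_top

theorem ProbabilityTheory.IdentDistrib.measureReal_lt_abs_eq {α β : Type*} [MeasurableSpace α]
    [MeasurableSpace β] {μ : Measure α} {ν : Measure β} {f : α → ℝ} {g : β → ℝ}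
    (h : IdentDistrib f g μ ν) (c : ℝ) :
    μ.real {x | c < |f x|} = ν.real {x | c < |g x|} :=
  congrArg ENNReal.toReal (h.measure_mem_eq (measurableSet_lt measurable_const measurable_abs))

section SmallRest

variable {Ω : Type*} {X : ℕ → Ω → ℝ}

def smallRest (X : ℕ → Ω → ℝ) (T : Finset ℕ) (c : ℝ) : Set Ω :=
  {ω | |∑ i ∈ T, X i ω| ≤ c / 2} ∩ ⋂ i ∈ T, {ω | |X i ω| ≤ c}

theorem measurableSet_smallRest {m : MeasurableSpace Ω} {T : Finset ℕ}
    (hX : ∀ i ∈ T, Measurable (X i)) (c : ℝ) : MeasurableSet (smallRest X T c) :=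
  (measurableSet_le (Finset.measurable_sum T hX).abs measurable_const).inter
    (Finset.measurableSet_biInter T fun i hi => measurableSet_le (hX i hi).abs measurable_const)

theorem compl_smallRest_subset {n j : ℕ} (hj : j ∈ range n) (c : ℝ) :
    (smallRest X ((range n).erase j) c)ᶜ ⊆
      ({ω | c / 4 < |∑ i ∈ range n, X i ω|} ∪ {ω | c / 4 < |X j ω|}) ∪
        ⋃ i ∈ (range n).erase j, {ω | c < |X i ω|} := by
  intro ω hω
  simp only [smallRest, Set.mem_compl_iff, Set.mem_inter_iff, Set.mem_ofPred_eq,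
    Set.mem_iInter, not_and_or, not_le, not_forall] at hω
  rcases hω with hsum | ⟨i, hi, hbig⟩
  · left
    by_contra hsmall
    simp only [Set.mem_union, Set.mem_ofPred_eq, not_or] at hsmall
    rw [← sum_erase_add _ _ hj] at hsmall
    have := abs_add_le (∑ i ∈ (range n).erase j, X i ω + X j ω) (-X j ω)
    simp only [add_neg_cancel_right, abs_neg] at this
    linarith
  · exact Or.inr (Set.mem_biUnion hi hbig)

theorem disjoint_smallRest {T : Finset ℕ} {k : ℕ} (hk : k ∈ T) (c : ℝ) :
    Disjoint {ω | c < |X k ω|} (smallRest X T c) :=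
  Set.disjoint_left.2 fun ω (hbig : c < |X k ω|) hsmall =>
    (Set.mem_iInter₂.1 hsmall.2 k hk).not_gt hbig

theorem inter_smallRest_subset {n j : ℕ} (hj : j ∈ range n) (c : ℝ) :
    {ω | c < |X j ω|} ∩ smallRest X ((range n).erase j) c ⊆
      {ω | c / 2 < |∑ i ∈ range n, X i ω|} := by
  rintro ω ⟨hbig, hrest, -⟩
  simp only [Set.mem_ofPred_eq] at hbig hrest ⊢
  rw [← sum_erase_add _ _ hj]
  have := abs_add_le (∑ i ∈ (range n).erase j, X i ω + X j ω)
    (-(∑ i ∈ (range n).erase j, X i ω))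
  simp only [add_neg_cancel_comm, abs_neg] at this
  linarith

end SmallRest

section IID

variable {Ω : Type*} [MeasurableSpace Ω] {μ : Measure Ω} {X : ℕ → Ω → ℝ}

theorem measureReal_lt_abs_le_partialSum_add [IsFiniteMeasure μ]
    (hident : ∀ i, IdentDistrib (X i) (X 0) μ μ) {ε : ℝ} (hε : 0 < ε) (n : ℕ) :
    μ.real {ω | ε * (n + 1 : ℕ) < |X 0 ω|} ≤
      μ.real {ω | ε / 2 * (n + 1 : ℕ) < |∑ i ∈ range (n + 1), X i ω|} +
        μ.real {ω | ε / 2 * n < |∑ i ∈ range n, X i ω|} := by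
  rw [← (hident n).measureReal_lt_abs_eq]
  refine (measureReal_mono fun ω hω => ?_).trans (measureReal_union_le _ _)
  by_contra hcon
  simp only [Set.mem_union, Set.mem_ofPred_eq, not_or, not_lt, sum_range_succ] at hω hcon
  push_cast at hω hcon
  have htri := abs_sub (∑ i ∈ range n, X i ω + X n ω) (∑ i ∈ range n, X i ω)
  rw [add_sub_cancel_left] at htri
  linarith

theorem summable_measureReal_lt_abs_of_summable_partialSum [IsFiniteMeasure μ]
    (hident : ∀ i, IdentDistrib (X i) (X 0) μ μ)
    (hS : ∀ ε > 0, Summable fun n : ℕ => μ.real {ω | ε * n < |∑ i ∈ range n, X i ω|})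
    {ε : ℝ} (hε : 0 < ε) : Summable fun n : ℕ => μ.real {ω | ε * n < |X 0 ω|} := by
  have hε2 : 0 < ε / 2 := half_pos hε
  refine (summable_nat_add_iff 1).1 <| Summable.of_nonneg_of_le (fun _ => measureReal_nonneg)
    (measureReal_lt_abs_le_partialSum_add hident hε) ?_
  exact ((summable_nat_add_iff 1).2 (hS _ hε2)).add (hS _ hε2)

theorem ProbabilityTheory.iIndepFun.measureReal_inter_smallRest_eq_mul
    (hmeas : ∀ i, Measurable (X i)) (hindep : iIndepFun X μ) {j : ℕ} {T : Finset ℕ}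
    (hj : j ∉ T) {s : Set ℝ} (hs : MeasurableSet s) (c : ℝ) :
    μ.real (X j ⁻¹' s ∩ smallRest X T c) = μ.real (X j ⁻¹' s) * μ.real (smallRest X T c) := by
  have h := indep_iSup_of_disjoint (fun i => (hmeas i).comap_le) hindep.iIndep
    (S := {j}) (T := T) (by simpa using hj)
  have hA : MeasurableSet[⨆ i ∈ ({j} : Set ℕ), MeasurableSpace.comap (X i) inferInstance]
      (X j ⁻¹' s) :=
    le_iSup₂ (f := fun i (_ : i ∈ ({j} : Set ℕ)) => MeasurableSpace.comap (X i) inferInstance)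
      j rfl _ ⟨s, hs, rfl⟩
  have hB : MeasurableSet[⨆ i ∈ (T : Set ℕ), MeasurableSpace.comap (X i) inferInstance]
      (smallRest X T c) :=
    measurableSet_smallRest (fun i hi => Measurable.of_comap_le (le_iSup₂
      (f := fun i (_ : i ∈ (T : Set ℕ)) => MeasurableSpace.comap (X i) inferInstance) i hi)) c
  simp only [measureReal_def, (Indep_iff _ _ μ).1 h _ _ hA hB, ENNReal.toReal_mul]

theorem measureReal_compl_smallRest_le [IsFiniteMeasure μ]
    (hident : ∀ i, IdentDistrib (X i) (X 0) μ μ) {n j : ℕ} (hj : j ∈ range n) (c : ℝ) :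
    μ.real (smallRest X ((range n).erase j) c)ᶜ ≤
      μ.real {ω | c / 4 < |∑ i ∈ range n, X i ω|} + μ.real {ω | c / 4 < |X 0 ω|} +
        n * μ.real {ω | c < |X 0 ω|} := calc
  _ ≤ μ.real {ω | c / 4 < |∑ i ∈ range n, X i ω|} + μ.real {ω | c / 4 < |X j ω|} +
        ∑ i ∈ (range n).erase j, μ.real {ω | c < |X i ω|} :=
      (measureReal_mono (compl_smallRest_subset hj c)).trans <|
        (measureReal_union_le _ _).trans <|
          add_le_add (measureReal_union_le _ _) (measureReal_biUnion_finset_le _ _)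
  _ ≤ _ := by
      simp only [(hident _).measureReal_lt_abs_eq, sum_const, nsmul_eq_mul]
      gcongr
      exact_mod_cast (card_erase_le).trans (card_range n).le

theorem natCast_mul_measureReal_lt_abs_mul_le [IsProbabilityMeasure μ]
    (hmeas : ∀ i, Measurable (X i)) (hindep : iIndepFun X μ)
    (hident : ∀ i, IdentDistrib (X i) (X 0) μ μ) (n : ℕ) (c : ℝ) :
    n * μ.real {ω | c < |X 0 ω|} * (1 - (μ.real {ω | c / 4 < |∑ i ∈ range n, X i ω|} +
      μ.real {ω | c / 4 < |X 0 ω|} + n * μ.real {ω | c < |X 0 ω|})) ≤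
        μ.real {ω | c / 2 < |∑ i ∈ range n, X i ω|} := by
  set p := μ.real {ω | c < |X 0 ω|} with hp
  set δ :=
    μ.real {ω | c / 4 < |∑ i ∈ range n, X i ω|} + μ.real {ω | c / 4 < |X 0 ω|} + n * p
  set E : ℕ → Set Ω := fun j => {ω | c < |X j ω|} ∩ smallRest X ((range n).erase j) c
  have hE : ∀ j ∈ range n, p * (1 - δ) ≤ μ.real (E j) := by
    intro j hj
    have hB := measurableSet_smallRest (T := (range n).erase j) (fun i _ => hmeas i) c
    calc p * (1 - δ) ≤ p * μ.real (smallRest X ((range n).erase j) c) := by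
          gcongr
          linarith [probReal_compl_eq_one_sub (μ := μ) hB,
            measureReal_compl_smallRest_le hident hj c]
      _ = μ.real (E j) := by
          rw [hp, ← (hident j).measureReal_lt_abs_eq c]
          exact (hindep.measureReal_inter_smallRest_eq_mul hmeas (notMem_erase j _)
            (measurableSet_lt measurable_const measurable_abs) c).symm
  have hdisj : (range n : Set ℕ).PairwiseDisjoint E := fun j _ k hk hjk =>
    ((disjoint_smallRest (mem_erase.2 ⟨hjk.symm, hk⟩) c).symm.mono_left
      Set.inter_subset_right).mono_right Set.inter_subset_left
  calc n * p * (1 - δ) = ∑ j ∈ range n, p * (1 - δ) := by simp [mul_assoc]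
    _ ≤ ∑ j ∈ range n, μ.real (E j) := sum_le_sum hE
    _ = μ.real (⋃ j ∈ range n, E j) := (measureReal_biUnion_finset hdisj fun j _ =>
        (measurableSet_lt measurable_const (hmeas j).abs).inter
          (measurableSet_smallRest (fun i _ => hmeas i) c)).symm
    _ ≤ _ := measureReal_mono (Set.iUnion₂_subset fun j hj => inter_smallRest_subset hj c)

theorem summable_natCast_mul_measureReal_lt_abs [IsProbabilityMeasure μ]
    (hmeas : ∀ i, Measurable (X i)) (hindep : iIndepFun X μ)
    (hident : ∀ i, IdentDistrib (X i) (X 0) μ μ)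
    (hS : ∀ ε > 0, Summable fun n : ℕ => μ.real {ω | ε * n < |∑ i ∈ range n, X i ω|})
    {ε : ℝ} (hε : 0 < ε) : Summable fun n : ℕ => n * μ.real {ω | ε * n < |X 0 ω|} := by
  set p : ℕ → ℝ := fun n => μ.real {ω | ε * n < |X 0 ω|}
  have hp : Antitone p := fun m n hmn => measureReal_mono fun ω (h : ε * n < |X 0 ω|) =>
    lt_of_le_of_lt (by gcongr) h
  have hδ : Tendsto (fun n : ℕ => μ.real {ω | ε / 4 * n < |∑ i ∈ range n, X i ω|} +
      μ.real {ω | ε / 4 * n < |X 0 ω|} + n * p n) atTop (𝓝 0) := by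
    have hε4 : 0 < ε / 4 := by positivity
    simpa using ((hS _ hε4).tendsto_atTop_zero.add
      (summable_measureReal_lt_abs_of_summable_partialSum hident hS hε4).tendsto_atTop_zero).add
      (hp.tendsto_natCast_mul_of_summable
        (summable_measureReal_lt_abs_of_summable_partialSum hident hS hε))
  refine Summable.of_norm_bounded_eventually_nat ((hS (ε / 2) (by positivity)).mul_left 2) ?_
  filter_upwards [hδ.eventually (gt_mem_nhds (by norm_num : (0 : ℝ) < 1 / 2))] with n hn
  have key := natCast_mul_measureReal_lt_abs_mul_le hmeas hindep hident n (ε * n)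
  rw [mul_div_right_comm, mul_div_right_comm ε] at key
  have hnp : 0 ≤ n * p n := by positivity
  rw [Real.norm_of_nonneg hnp]
  nlinarith

theorem integral_eq_zero_of_summable_measureReal_lt_abs [IsProbabilityMeasure μ]
    (hint : Integrable (X 0) μ) (hindep : Pairwise fun i j => IndepFun (X i) (X j) μ)
    (hident : ∀ i, IdentDistrib (X i) (X 0) μ μ)
    (hS : ∀ ε > 0, Summable fun n : ℕ => μ.real {ω | ε * n < |∑ i ∈ range n, X i ω|}) :
    μ[X 0] = 0 := by
  by_contra hm
  have hε : 0 < |μ[X 0]| / 2 := half_pos (abs_pos.2 hm)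
  have hsum : ∑' n : ℕ, μ {ω | |μ[X 0]| / 2 * n < |∑ i ∈ range n, X i ω|} ≠ ⊤ := by
    rw [tsum_congr fun n => (ofReal_measureReal (measure_ne_top μ _)).symm,
      ← ENNReal.ofReal_tsum_of_nonneg (fun _ => measureReal_nonneg) (hS _ hε)]
    exact ENNReal.ofReal_ne_top
  obtain ⟨ω, hlim, hsmall⟩ :=
    ((strong_law_ae_real X hint hindep hident).and (ae_eventually_notMem hsum)).exists
  have hle : |μ[X 0]| ≤ |μ[X 0]| / 2 := by
    refine le_of_tendsto hlim.abs (hsmall.mono fun n hn => ?_)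
    rw [abs_div, Nat.abs_cast]
    exact div_le_of_le_mul₀ n.cast_nonneg hε.le (not_lt.1 hn)
  linarith

end IID

theorem stmt_17 {Ω : Type*} [MeasureSpace Ω] [IsProbabilityMeasure (ℙ : Measure Ω)]
    (X : ℕ → Ω → ℝ) (hmeas : ∀ i, Measurable (X i))
    (hindep : iIndepFun X (ℙ : Measure Ω))
    (hident : ∀ i, IdentDistrib (X i) (X 0) (ℙ : Measure Ω) (ℙ : Measure Ω))
    (hsum : ∀ ε : ℝ, 0 < ε →
      Summable (fun n : ℕ =>
        (ℙ {ω | ε * ((n : ℝ) + 1) < |∑ i ∈ Finset.range (n + 1), X i ω|}).toReal)) :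
    Integrable (fun ω => (X 0 ω) ^ 2) (ℙ : Measure Ω) ∧
      (∫ ω, X 0 ω ∂(ℙ : Measure Ω)) = 0 := by
  have hS : ∀ ε > 0, Summable fun n : ℕ =>
      (ℙ : Measure Ω).real {ω | ε * n < |∑ i ∈ range n, X i ω|} := fun ε hε =>
    (summable_nat_add_iff 1).1 (by exact_mod_cast hsum ε hε)
  have hsq : Integrable (fun ω => X 0 ω ^ 2) ℙ := by
    refine integrable_pow_of_summable_measureReal_lt_abs (hmeas 0) two_ne_zero ?_
    have h := ((summable_natCast_mul_measureReal_lt_abs hmeas hindep hident hS one_pos).mul_left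
      2).add (summable_measureReal_lt_abs_of_summable_partialSum hident hS one_pos)
    refine h.congr fun n => ?_
    simp only [one_mul]
    ring
  have hint : Integrable (X 0) ℙ :=
    ((memLp_two_iff_integrable_sq (hmeas 0).aestronglyMeasurable).2 hsq).integrable one_le_two
  exact ⟨hsq, integral_eq_zero_of_summable_measureReal_lt_abs hint
    (fun i j hij => hindep.indepFun hij) hident hS⟩
end

section
/- (Spitzer) Let X₁, X₂, … be independent identically distributed real random variables and set S_n = X₁ + ⋯ + X_n. Then Σ_{n≥1} (1/n) P(|S_n| > ε n) < ∞ for every ε > 0 if and only if E|X₁| < ∞ and E X₁ = 0. -/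
/-!
Sufficiency: truncate at level `n`. Off the event that some `|X_i| ≥ n`, which has probability at
most `n P(|X| ≥ n)`, the sum `S_n` equals the truncated sum, whose mean is `o(n)` and whose variance
is at most `n E[X²; |X| ≤ n]`. Chebyshev's inequality then bounds `P(|S_n| > ε n) / n` by
`P(|X| ≥ n) + C E[X²; |X| ≤ n] / n²`, and both series converge when `E|X| < ∞`, as in the proof of
the strong law.

Mean zero: by the strong law `S_n / n → E X` almost surely, so for `E X ≠ 0` and `ε = |E X| / 2`
the probabilities `P(|S_n| > ε n)` tend to `1` and the series is harmonic.

Integrability: a single large summand makes the sum large. With `p = P(|X| > n)`,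
`a = P(|S_n| > n/3)` and `q = P(|X| > n/3)`, the events `{|X_k| > n, |S_n - X_k| ≤ 2n/3}`, `k < K`,
lie in `{|S_n| > n/3}`, have probability at least `p (1 - a - q)` by independence, and meet
pairwise with probability at most `p²`. Bonferroni's inequality gives `K p (1 - a - q) ≤ a + K² p²`
for all `K ≤ n`, whence `min (1/8) (n p) ≤ 2 a` as soon as `q ≤ 1/8`. So `Σ min (1/(8n)) p_n < ∞`,
and as `p_n` is antitone, Cauchy condensation upgrades this to `Σ p_n < ∞`, that is, `E|X| < ∞`.
-/

open MeasureTheory ProbabilityTheory Filter Real Topology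
open scoped ENNReal

lemma summable_of_summable_min_div {p : ℕ → ℝ} {c : ℝ} (hc : 0 < c) (hp0 : ∀ n, 0 ≤ p n)
    (hp : Antitone p) (h : Summable fun n : ℕ => min (c / n) (p n)) : Summable p := by
  have hcond := (summable_condensed_iff_of_nonneg (fun n => le_min (by positivity) (hp0 n))
    fun m n hm hmn => min_le_min (div_le_div_of_nonneg_left hc.le (by exact_mod_cast hm)
      (by exact_mod_cast hmn)) (hp hmn)).2 h
  have hmul : ∀ k : ℕ, (2 : ℝ) ^ k * min (c / (2 ^ k : ℕ)) (p (2 ^ k)) =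
      min c (2 ^ k * p (2 ^ k)) := fun k => by
    rw [mul_min_of_nonneg _ _ (by positivity)]
    push_cast
    rw [mul_div_cancel₀ _ (by positivity)]
  refine (summable_condensed_iff_of_nonneg hp0 fun m n _ hmn => hp hmn).1 ?_
  refine hcond.of_norm_bounded_eventually_nat ?_
  filter_upwards [hcond.tendsto_atTop_zero.eventually (eventually_lt_nhds hc)] with k hk
  rw [hmul] at hk ⊢
  have hlt : (2 : ℝ) ^ k * p (2 ^ k) < c := (min_lt_iff.1 hk).resolve_left (lt_irrefl c)
  rw [min_eq_right hlt.le, Real.norm_of_nonneg (mul_nonneg (by positivity) (hp0 _))]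

lemma min_eighth_mul_le_two_mul {n : ℕ} {p q a : ℝ} (hn : 1 ≤ n) (hp : 0 ≤ p) (hpq : p ≤ q)
    (hq : q ≤ 1 / 8) (ha : 0 ≤ a)
    (h : ∀ K : ℕ, 1 ≤ K → K ≤ n → K * p * (1 - a - q) ≤ a + K ^ 2 * p ^ 2) :
    min (1 / 8) (n * p) ≤ 2 * a := by
  rcases lt_or_ge (1 / 8) a with ha8 | ha8
  · exact (min_le_left _ _).trans (by linarith)
  rcases hp.eq_or_lt with rfl | hp0
  · simpa using ha
  set L := ⌊1 / (4 * p)⌋₊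
  have hL : (L : ℝ) ≤ 1 / (4 * p) := Nat.floor_le (by positivity)
  have hL1 : 1 ≤ L := Nat.one_le_floor_iff _ |>.2 (by rw [le_div_iff₀ (by positivity)]; linarith)
  set K := min n L
  have hKp : K * p ≤ 1 / 4 :=
    calc (K : ℝ) * p ≤ L * p := by gcongr; exact_mod_cast min_le_right n L
      _ ≤ 1 / (4 * p) * p := by gcongr
      _ = 1 / 4 := by field_simp
  -- `K * p ≤ 1/4` turns the quadratic bound into a linear one
  have hKa : K * p ≤ 2 * a := by
    have hK := h K (le_min hn hL1) (min_le_left n L)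
    have hK0 : (0 : ℝ) ≤ K * p := by positivity
    nlinarith
  have hmin : min (1 / 8) (n * p) ≤ K * p := by
    obtain hK | hK : K = n ∨ K = L := min_choice n L
    · rw [hK]; exact min_le_right _ _
    · refine (min_le_left _ _).trans ?_
      have hL' : 1 / (4 * p) - 1 < L := Nat.sub_one_lt_floor _
      have : 1 / 4 - p < K * p := by
        rw [hK]
        calc 1 / 4 - p = (1 / (4 * p) - 1) * p := by field_simp
          _ < L * p := by gcongr
      linarith
  linarith

lemma not_summable_one_div_add_one_mul {b : ℕ → ℝ} {c : ℝ} (hc : 0 < c)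
    (hb : ∀ᶠ n in atTop, c ≤ b n) : ¬Summable fun n : ℕ => 1 / ((n : ℝ) + 1) * b n := by
  intro h
  have h1 : Summable fun n : ℕ => 1 / ((n + 1 : ℕ) : ℝ) := by
    refine (h.mul_left c⁻¹).of_norm_bounded_eventually_nat ?_
    filter_upwards [hb] with n hn
    rw [Real.norm_of_nonneg (by positivity), Nat.cast_add_one,
      ← mul_le_mul_iff_of_pos_left hc, ← mul_assoc, mul_inv_cancel₀ hc.ne', one_mul]
    exact (mul_comm _ _).trans_le (mul_le_mul_of_nonneg_left hn (by positivity))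
  exact Real.not_summable_one_div_natCast ((summable_nat_add_iff 1).1 h1)

lemma sum_measureReal_le_measureReal_biUnion_add {α : Type*} [MeasurableSpace α] (μ : Measure α)
    [IsFiniteMeasure μ] {A : ℕ → Set α} (hA : ∀ k, MeasurableSet (A k)) (K : ℕ) :
    ∑ k ∈ Finset.range K, μ.real (A k) ≤ μ.real (⋃ k ∈ Finset.range K, A k) +
      ∑ k ∈ Finset.range K, ∑ j ∈ Finset.range k, μ.real (A j ∩ A k) := by
  induction K with
  | zero => simp
  | succ K ih =>
    set U := ⋃ k ∈ Finset.range K, A k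
    have hunion : (⋃ k ∈ Finset.range (K + 1), A k) = U ∪ A K := by
      simp [U, Finset.range_add_one, Set.union_comm]
    have hinter : μ.real (U ∩ A K) ≤ ∑ j ∈ Finset.range K, μ.real (A j ∩ A K) := by
      rw [Set.iUnion₂_inter]
      exact measureReal_biUnion_finset_le _ _
    have hadd := measureReal_union_add_inter (μ := μ) (s := U) (hA K) (measure_ne_top μ U)
    simp only [Finset.sum_range_succ, hunion]
    linarith

lemma natCast_mul_le_measureReal_biUnion_add {α : Type*} [MeasurableSpace α] (μ : Measure α)
    [IsFiniteMeasure μ] {A : ℕ → Set α} (hA : ∀ k, MeasurableSet (A k)) {K : ℕ} {a b : ℝ}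
    (ha : ∀ k < K, a ≤ μ.real (A k)) (hb : ∀ j k, j < k → k < K → μ.real (A j ∩ A k) ≤ b)
    (hb0 : 0 ≤ b) :
    K * a ≤ μ.real (⋃ k ∈ Finset.range K, A k) + K ^ 2 * b := by
  have hpairs : ∑ k ∈ Finset.range K, ∑ j ∈ Finset.range k, μ.real (A j ∩ A k) ≤ K ^ 2 * b :=
    calc _ ≤ ∑ k ∈ Finset.range K, ∑ j ∈ Finset.range K, b := by
          refine Finset.sum_le_sum fun k hk => ?_
          refine (Finset.sum_le_sum fun j hj => hb j k (Finset.mem_range.1 hj)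
            (Finset.mem_range.1 hk)).trans ?_
          exact Finset.sum_le_sum_of_subset_of_nonneg (Finset.range_subset_range.2
            (Finset.mem_range.1 hk).le) fun _ _ _ => hb0
      _ = K ^ 2 * b := by simp only [Finset.sum_const, Finset.card_range, nsmul_eq_mul]; ring
  calc (K : ℝ) * a = ∑ k ∈ Finset.range K, a := by simp
    _ ≤ ∑ k ∈ Finset.range K, μ.real (A k) :=
        Finset.sum_le_sum fun k hk => ha k (Finset.mem_range.1 hk)
    _ ≤ _ := (sum_measureReal_le_measureReal_biUnion_add μ hA K).trans (by linarith)

lemma ofReal_abs_le_tsum_indicator (y : ℝ) :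
    ENNReal.ofReal |y| ≤ ∑' n : ℕ, {x : ℝ | (n : ℝ) < |x|}.indicator 1 y :=
  calc ENNReal.ofReal |y| ≤ (⌈|y|⌉₊ : ℝ≥0∞) := by
        simpa using ENNReal.ofReal_le_ofReal (Nat.le_ceil |y|)
    _ = ∑ n ∈ Finset.range ⌈|y|⌉₊, {x : ℝ | (n : ℝ) < |x|}.indicator 1 y := by
        rw [Finset.sum_congr rfl fun (n : ℕ) hn =>
          Set.indicator_of_mem (s := {x : ℝ | (n : ℝ) < |x|})
            (Nat.lt_ceil.1 (Finset.mem_range.1 hn)) (1 : ℝ → ℝ≥0∞)]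
        simp
    _ ≤ _ := ENNReal.sum_le_tsum _

lemma truncation_sq_le_truncation_abs_sq {α : Type*} (f : α → ℝ) (A : ℝ) (x : α) :
    truncation f A x ^ 2 ≤ truncation (fun y => |f y|) A x ^ 2 := by
  simp only [truncation, Function.comp_apply, Set.indicator, Set.mem_Ioc, id]
  split_ifs with hf habs
  · rw [sq_abs]
  · exact absurd ⟨by linarith [abs_nonneg (f x), hf.1], abs_le.2 ⟨hf.1.le, hf.2⟩⟩ habs
  · simpa using sq_nonneg |f x|
  · rfl

lemma ProbabilityTheory.measureReal_le_variance_div_sq {α : Type*} [MeasurableSpace α]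
    {μ : Measure α} [IsFiniteMeasure μ] {Y : α → ℝ} (hY : MemLp Y 2 μ) {c : ℝ} (hc : 0 < c) :
    μ.real {ω | c ≤ |Y ω - μ[Y]|} ≤ variance Y μ / c ^ 2 :=
  ENNReal.toReal_le_of_le_ofReal (div_nonneg (variance_nonneg _ _) (sq_nonneg _))
    (meas_ge_le_variance_div_sq hY hc)

lemma ProbabilityTheory.IdentDistrib.measureReal_mem_eq {α β γ : Type*} [MeasurableSpace α]
    [MeasurableSpace β] [MeasurableSpace γ] {μ : Measure α} {ν : Measure β} {f : α → γ} {g : β → γ}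
    (h : IdentDistrib f g μ ν) {s : Set γ} (hs : MeasurableSet s) :
    μ.real (f ⁻¹' s) = ν.real (g ⁻¹' s) :=
  congrArg ENNReal.toReal (h.measure_mem_eq hs)

lemma ProbabilityTheory.IndepFun.measureReal_inter_preimage_eq_mul {α β γ : Type*}
    [MeasurableSpace α] [MeasurableSpace β] [MeasurableSpace γ] {μ : Measure α} {f : α → β}
    {g : α → γ} (h : IndepFun f g μ) {s : Set β} {t : Set γ} (hs : MeasurableSet s)
    (ht : MeasurableSet t) :
    μ.real (f ⁻¹' s ∩ g ⁻¹' t) = μ.real (f ⁻¹' s) * μ.real (g ⁻¹' t) := by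
  simp only [measureReal_def, h.measure_inter_preimage_eq_mul _ _ hs ht, ENNReal.toReal_mul]

section Probability

variable {Ω : Type*} [MeasureSpace Ω] [IsProbabilityMeasure (ℙ : Measure Ω)]

lemma summable_measureReal_lt_abs_iff {Y : Ω → ℝ} (hY : Measurable Y) :
    Summable (fun n : ℕ => (ℙ).real {ω | (n : ℝ) < |Y ω|}) ↔ Integrable Y := by
  have hmeas : ∀ n : ℕ, MeasurableSet {x : ℝ | (n : ℝ) < |x|} :=
    fun n => measurableSet_lt measurable_const measurable_abs
  refine ⟨fun h => ⟨hY.aestronglyMeasurable, ?_⟩, fun h => ?_⟩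
  · rw [hasFiniteIntegral_iff_norm]
    calc ∫⁻ ω, ENNReal.ofReal ‖Y ω‖
        ≤ ∫⁻ ω, ∑' n : ℕ, {x : ℝ | (n : ℝ) < |x|}.indicator 1 (Y ω) :=
          lintegral_mono fun ω => ofReal_abs_le_tsum_indicator (Y ω)
      _ = ∑' n : ℕ, ℙ {ω | (n : ℝ) < |Y ω|} := by
          rw [lintegral_tsum (f := fun (n : ℕ) ω => {x : ℝ | (n : ℝ) < |x|}.indicator 1 (Y ω))
            fun n => ((measurable_one.indicator (hmeas n)).comp hY).aemeasurable]
          refine tsum_congr fun n => ?_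
          exact lintegral_indicator_one ((hmeas n).preimage hY)
      _ = ENNReal.ofReal (∑' n : ℕ, (ℙ).real {ω | (n : ℝ) < |Y ω|}) := by
          rw [ENNReal.ofReal_tsum_of_nonneg (fun n => measureReal_nonneg) h]
          simp [ofReal_measureReal]
      _ < ⊤ := ENNReal.ofReal_lt_top
  · exact ENNReal.summable_toReal (tsum_prob_mem_Ioi_lt_top h.abs fun ω => abs_nonneg _).ne

lemma tendsto_measureReal_lt_abs_atTop {Y : Ω → ℝ} (hY : Measurable Y) :
    Tendsto (fun t : ℝ => (ℙ).real {ω | t < |Y ω|}) atTop (𝓝 0) := by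
  have hanti : Antitone fun t : ℝ => {ω | t < |Y ω|} :=
    fun s t hst ω (hω : t < |Y ω|) => lt_of_le_of_lt hst hω
  have hempty : (⋂ t : ℝ, {ω | t < |Y ω|}) = ∅ :=
    Set.eq_empty_of_forall_notMem fun ω hω => lt_irrefl |Y ω| (Set.mem_iInter.1 hω |Y ω|)
  have h := tendsto_measure_iInter_atTop
    (fun t => (measurableSet_lt measurable_const hY.abs).nullMeasurableSet) hanti
    ⟨0, measure_ne_top ℙ _⟩
  rw [hempty, measure_empty] at h
  exact (ENNReal.tendsto_toReal ENNReal.zero_ne_top).comp h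

lemma one_sub_le_measureReal_abs_le {S U V : Ω → ℝ} (hV : Measurable V)
    (hS : ∀ ω, S ω = U ω + V ω) (s r : ℝ) :
    1 - (ℙ).real {ω | s < |S ω|} - (ℙ).real {ω | r < |U ω|} ≤ (ℙ).real {ω | |V ω| ≤ s + r} := by
  have hcompl : {ω | |V ω| ≤ s + r}ᶜ ⊆ {ω | s < |S ω|} ∪ {ω | r < |U ω|} := by
    intro ω hω
    by_contra hcon
    simp only [Set.mem_compl_iff, Set.mem_union, Set.mem_ofPred_eq, not_le, not_or, not_lt]
      at hω hcon
    obtain ⟨hSω, hUω⟩ := hcon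
    rw [hS ω, add_comm] at hSω
    linarith [abs_sub_abs_le_abs_add (V ω) (U ω)]
  have := (measureReal_mono (μ := ℙ) hcompl).trans (measureReal_union_le _ _)
  rw [probReal_compl_eq_one_sub (measurableSet_le hV.abs measurable_const)] at this
  linarith

namespace Spitzer

variable {X : ℕ → Ω → ℝ}

lemma natCast_mul_measureReal_lt_abs_le (hmeas : ∀ i, Measurable (X i))
    (hindep : iIndepFun X ℙ) (hident : ∀ i, IdentDistrib (X i) (X 0) ℙ ℙ) (t : ℝ) {n K : ℕ}
    (hKn : K ≤ n) :
    K * (ℙ).real {ω | t < |X 0 ω|} * (1 - (ℙ).real {ω | t / 3 < |∑ i ∈ Finset.range n, X i ω|}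
        - (ℙ).real {ω | t / 3 < |X 0 ω|}) ≤
      (ℙ).real {ω | t / 3 < |∑ i ∈ Finset.range n, X i ω|} +
        K ^ 2 * (ℙ).real {ω | t < |X 0 ω|} ^ 2 := by
  set p := (ℙ).real {ω | t < |X 0 ω|}
  set a := (ℙ).real {ω | t / 3 < |∑ i ∈ Finset.range n, X i ω|}
  set q := (ℙ).real {ω | t / 3 < |X 0 ω|}
  let B : Set ℝ := {x | t < |x|}
  let C : Set ℝ := {x | |x| ≤ t / 3 + t / 3}
  have hB : MeasurableSet B := measurableSet_lt measurable_const measurable_abs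
  have hC : MeasurableSet C := measurableSet_le measurable_abs measurable_const
  have hXB : ∀ k, (ℙ).real (X k ⁻¹' B) = p := fun k => (hident k).measureReal_mem_eq hB
  let Y : ℕ → Ω → ℝ := fun k => ∑ j ∈ (Finset.range n).erase k, X j
  have hY : ∀ k, Measurable (Y k) := fun k => by fun_prop
  have hXY : ∀ k < n, ∀ ω, ∑ i ∈ Finset.range n, X i ω = X k ω + Y k ω := fun k hk ω => by
    simp only [Y, Finset.sum_apply]
    exact (Finset.add_sum_erase _ _ (Finset.mem_range.2 hk)).symm
  let A : ℕ → Set Ω := fun k => X k ⁻¹' B ∩ Y k ⁻¹' C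
  have hA_low : ∀ k < K, p * (1 - a - q) ≤ (ℙ).real (A k) := fun k hk => by
    have hC_low := one_sub_le_measureReal_abs_le (hY k) (hXY k (hk.trans_le hKn)) (t / 3) (t / 3)
    have hXq : (ℙ).real {ω | t / 3 < |X k ω|} = q :=
      (hident k).measureReal_mem_eq (measurableSet_lt measurable_const measurable_abs)
    rw [hXq] at hC_low
    rw [(hindep.indepFun_finsetSum_of_notMem hmeas (Finset.notMem_erase k _)).symm
      |>.measureReal_inter_preimage_eq_mul hB hC, hXB k]
    exact mul_le_mul_of_nonneg_left hC_low measureReal_nonneg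
  have hA_pair : ∀ j k, j < k → k < K → (ℙ).real (A j ∩ A k) ≤ p ^ 2 := fun j k hjk _ =>
    calc (ℙ).real (A j ∩ A k) ≤ (ℙ).real (X j ⁻¹' B ∩ X k ⁻¹' B) :=
          measureReal_mono fun ω hω => ⟨hω.1.1, hω.2.1⟩
      _ = p ^ 2 := by
          rw [(hindep.indepFun hjk.ne).measureReal_inter_preimage_eq_mul hB hB, hXB, hXB, sq]
  have hA_sub : (⋃ k ∈ Finset.range K, A k) ⊆ {ω | t / 3 < |∑ i ∈ Finset.range n, X i ω|} := by
    refine Set.iUnion₂_subset fun k hk ω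
      ⟨(hXk : t < |X k ω|), (hYk : |Y k ω| ≤ t / 3 + t / 3)⟩ => ?_
    show t / 3 < |∑ i ∈ Finset.range n, X i ω|
    rw [hXY k ((Finset.mem_range.1 hk).trans_le hKn) ω]
    linarith [abs_sub_abs_le_abs_add (X k ω) (Y k ω)]
  have := natCast_mul_le_measureReal_biUnion_add ℙ (fun k => (hmeas k hB).inter (hY k hC))
    hA_low hA_pair (sq_nonneg p)
  rw [mul_assoc]
  linarith [measureReal_mono (μ := ℙ) hA_sub]

lemma variance_sum_truncation_le (hmeas : ∀ i, Measurable (X i)) (hindep : iIndepFun X ℙ)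
    (hident : ∀ i, IdentDistrib (X i) (X 0) ℙ ℙ) (m : ℕ) (A : ℝ) :
    Var[∑ i ∈ Finset.range m, truncation (X i) A] ≤
      m * 𝔼[truncation (fun ω => |X 0 ω|) A ^ 2] := by
  have hLp : ∀ i, MemLp (truncation (X i) A) 2 ℙ :=
    fun i => (hmeas i).aestronglyMeasurable.memLp_truncation
  have htrunc : Measurable (truncation (id : ℝ → ℝ) A) := measurable_id.indicator measurableSet_Ioc
  rw [IndepFun.variance_sum (fun i _ => hLp i)
    fun i _ j _ hij => (hindep.indepFun hij).comp htrunc htrunc]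
  calc ∑ i ∈ Finset.range m, Var[truncation (X i) A]
      = m * Var[truncation (X 0) A] := by
        rw [Finset.sum_congr rfl fun i _ => (hident i).truncation.variance_eq]
        simp
    _ ≤ m * 𝔼[truncation (X 0) A ^ 2] := by
        gcongr
        exact variance_le_expectation_sq (hLp 0).1
    _ ≤ m * 𝔼[truncation (fun ω => |X 0 ω|) A ^ 2] :=
        mul_le_mul_of_nonneg_left (integral_mono (hLp 0).integrable_sq
          ((hmeas 0).abs.aestronglyMeasurable.memLp_truncation.integrable_sq)
          fun ω => truncation_sq_le_truncation_abs_sq (X 0) A ω) (Nat.cast_nonneg m)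

lemma integral_sum_truncation (hmeas : ∀ i, Measurable (X i))
    (hident : ∀ i, IdentDistrib (X i) (X 0) ℙ ℙ) (m : ℕ) (A : ℝ) :
    𝔼[∑ i ∈ Finset.range m, truncation (X i) A] = m * 𝔼[truncation (X 0) A] := by
  simp only [Finset.sum_apply]
  rw [integral_finsetSum _ fun i _ => (hmeas i).aestronglyMeasurable.integrable_truncation,
    Finset.sum_congr rfl fun i _ => (hident i).truncation.integral_eq]
  simp

lemma measureReal_lt_abs_sum_le (hmeas : ∀ i, Measurable (X i)) (hindep : iIndepFun X ℙ)
    (hident : ∀ i, IdentDistrib (X i) (X 0) ℙ ℙ) {ε : ℝ} (hε : 0 < ε) {m : ℕ} (hm : 0 < m)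
    (hmean : |∫ ω, truncation (X 0) m ω| ≤ ε / 2) :
    (ℙ).real {ω | ε * m < |∑ i ∈ Finset.range m, X i ω|} ≤
      m * (ℙ).real {ω | (m : ℝ) ≤ |X 0 ω|} +
        4 / ε ^ 2 * (𝔼[truncation (fun ω => |X 0 ω|) m ^ 2] / m) := by
  set T := ∑ i ∈ Finset.range m, truncation (X i) m
  have hmR : (0 : ℝ) < m := Nat.cast_pos.2 hm
  have hET : |𝔼[T]| ≤ ε / 2 * m := by
    rw [integral_sum_truncation hmeas hident, abs_mul, Nat.abs_cast, mul_comm]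
    exact mul_le_mul_of_nonneg_right hmean hmR.le
  -- off the event that some `|X i| ≥ m`, the sum equals its truncation `T`
  have hsub : {ω | ε * m < |∑ i ∈ Finset.range m, X i ω|} ⊆
      (⋃ i ∈ Finset.range m, X i ⁻¹' {x | (m : ℝ) ≤ |x|}) ∪ {ω | ε / 2 * m ≤ |T ω - 𝔼[T]|} := by
    intro ω hω
    by_contra hcon
    simp only [Set.mem_union, Set.mem_iUnion₂, Set.mem_preimage, Set.mem_ofPred_eq, not_or,
      not_exists, not_le] at hcon hω
    obtain ⟨hsmall, hdev⟩ := hcon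
    have hTS : T ω = ∑ i ∈ Finset.range m, X i ω := by
      simp only [T, Finset.sum_apply]
      exact Finset.sum_congr rfl fun i hi => truncation_eq_self (hsmall i hi)
    rw [hTS] at hdev
    linarith [abs_sub_abs_le_abs_sub (∑ i ∈ Finset.range m, X i ω) 𝔼[T]]
  have hcheb : (ℙ).real {ω | ε / 2 * m ≤ |T ω - 𝔼[T]|} ≤ Var[T] / (ε / 2 * m) ^ 2 :=
    measureReal_le_variance_div_sq
      (memLp_finsetSum' _ fun i _ => (hmeas i).aestronglyMeasurable.memLp_truncation)
      (by positivity)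
  have hunion : (ℙ).real (⋃ i ∈ Finset.range m, X i ⁻¹' {x | (m : ℝ) ≤ |x|}) ≤
      m * (ℙ).real {ω | (m : ℝ) ≤ |X 0 ω|} := by
    refine (measureReal_biUnion_finset_le _ _).trans_eq ?_
    rw [Finset.sum_congr rfl fun i _ => (hident i).measureReal_mem_eq
      (measurableSet_le measurable_const measurable_abs)]
    simp
  have hvar : Var[T] / (ε / 2 * m) ^ 2 ≤
      4 / ε ^ 2 * (𝔼[truncation (fun ω => |X 0 ω|) m ^ 2] / m) := by
    refine (div_le_div_of_nonneg_right (variance_sum_truncation_le hmeas hindep hident m m)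
      (by positivity)).trans_eq ?_
    field_simp
    ring
  calc _ ≤ _ := (measureReal_mono hsub).trans (measureReal_union_le _ _)
    _ ≤ _ := add_le_add hunion (hcheb.trans hvar)

lemma summable_of_integrable_of_integral_eq_zero (hmeas : ∀ i, Measurable (X i))
    (hindep : iIndepFun X ℙ) (hident : ∀ i, IdentDistrib (X i) (X 0) ℙ ℙ)
    (hint : Integrable (X 0)) (hzero : 𝔼[X 0] = 0) {ε : ℝ} (hε : 0 < ε) :
    Summable fun n : ℕ => 1 / ((n : ℝ) + 1) *
      (ℙ).real {ω | ε * ((n : ℝ) + 1) < |∑ i ∈ Finset.range (n + 1), X i ω|} := by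
  set E2 : ℕ → ℝ := fun j => 𝔼[truncation (fun ω => |X 0 ω|) j ^ 2]
  have htail := (summable_measureReal_lt_abs_iff (hmeas 0)).2 hint
  have hE2 : Summable fun j : ℕ => ((j : ℝ) ^ 2)⁻¹ * E2 j :=
    summable_of_sum_range_le (fun j => mul_nonneg (by positivity)
      (integral_nonneg fun ω => sq_nonneg _))
      (sum_variance_truncation_le hint.abs fun ω => abs_nonneg _)
  have hmean : ∀ᶠ n : ℕ in atTop, |∫ ω, truncation (X 0) ((n + 1 : ℕ) : ℝ) ω| ≤ ε / 2 := by
    have h := (tendsto_integral_truncation hint).comp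
      (tendsto_natCast_atTop_atTop.comp (tendsto_add_atTop_nat 1))
    rw [hzero] at h
    simpa using h.abs.eventually (eventually_le_nhds (show |(0 : ℝ)| < ε / 2 by simpa using hε))
  refine (htail.add (((summable_nat_add_iff 1).2 hE2).mul_left (4 / ε ^ 2)))
    |>.of_norm_bounded_eventually_nat ?_
  filter_upwards [hmean] with n hn
  have hbound := measureReal_lt_abs_sum_le hmeas hindep hident hε n.succ_pos hn
  have hsub : {ω | ((n + 1 : ℕ) : ℝ) ≤ |X 0 ω|} ⊆ {ω | (n : ℝ) < |X 0 ω|} :=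
    fun ω (hω : _ ≤ _) => (by push_cast; linarith : (n : ℝ) < _).trans_le hω
  rw [Real.norm_of_nonneg (by positivity)]
  calc 1 / ((n : ℝ) + 1) *
        (ℙ).real {ω | ε * ((n : ℝ) + 1) < |∑ i ∈ Finset.range (n + 1), X i ω|}
      ≤ 1 / ((n : ℝ) + 1) * ((n + 1) * (ℙ).real {ω | ((n + 1 : ℕ) : ℝ) ≤ |X 0 ω|} +
          4 / ε ^ 2 * (E2 (n + 1) / (n + 1))) := by
        gcongr
        exact_mod_cast hbound
    _ = (ℙ).real {ω | ((n + 1 : ℕ) : ℝ) ≤ |X 0 ω|} +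
          4 / ε ^ 2 * ((((n + 1 : ℕ) : ℝ) ^ 2)⁻¹ * E2 (n + 1)) := by
        push_cast
        field_simp
    _ ≤ _ := add_le_add_left (measureReal_mono hsub) _

lemma integral_eq_zero_of_summable (hmeas : ∀ i, Measurable (X i)) (hindep : iIndepFun X ℙ)
    (hident : ∀ i, IdentDistrib (X i) (X 0) ℙ ℙ) (hint : Integrable (X 0))
    (h : ∀ ε : ℝ, 0 < ε → Summable fun n : ℕ => 1 / ((n : ℝ) + 1) *
      (ℙ).real {ω | ε * ((n : ℝ) + 1) < |∑ i ∈ Finset.range (n + 1), X i ω|}) :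
    𝔼[X 0] = 0 := by
  by_contra hmean
  set ε := |𝔼[X 0]| / 2
  have hε : 0 < ε := by positivity
  have hε2 : |𝔼[X 0]| = 2 * ε := by simp only [ε]; ring
  have hlaw : TendstoInMeasure ℙ (fun n ω => (∑ i ∈ Finset.range n, X i ω) / n) atTop
      fun _ => 𝔼[X 0] :=
    tendstoInMeasure_of_tendsto_ae (fun n => by fun_prop)
      (strong_law_ae_real X hint (fun i j hij => hindep.indepFun hij) hident)
  have hdev := ((tendstoInMeasure_iff_measureReal_dist.1 hlaw ε hε).comp
    (tendsto_add_atTop_nat 1)).eventually (eventually_le_nhds (by norm_num : (0 : ℝ) < 1 / 2))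
  refine not_summable_one_div_add_one_mul (by norm_num : (0 : ℝ) < 1 / 2) ?_ (h ε hε)
  filter_upwards [hdev] with n hn
  -- if `|S_{n+1}| ≤ ε (n+1)` then the average is at distance `≥ |𝔼[X 0]| - ε = ε` from the mean
  have hsub : {ω | ε * ((n : ℝ) + 1) < |∑ i ∈ Finset.range (n + 1), X i ω|}ᶜ ⊆
      {ω | ε ≤ dist ((∑ i ∈ Finset.range (n + 1), X i ω) / ((n + 1 : ℕ) : ℝ)) 𝔼[X 0]} := by
    intro ω hω
    simp only [Set.mem_compl_iff, Set.mem_ofPred_eq, not_lt] at hω ⊢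
    have havg : |(∑ i ∈ Finset.range (n + 1), X i ω) / ((n + 1 : ℕ) : ℝ)| ≤ ε := by
      rw [abs_div, Nat.abs_cast, div_le_iff₀ (by positivity)]
      exact_mod_cast hω
    rw [Real.dist_eq, abs_sub_comm]
    linarith [abs_sub_abs_le_abs_sub 𝔼[X 0]
      ((∑ i ∈ Finset.range (n + 1), X i ω) / ((n + 1 : ℕ) : ℝ))]
  have hcompl := (measureReal_mono (μ := ℙ) hsub).trans hn
  rw [probReal_compl_eq_one_sub (measurableSet_lt measurable_const (by fun_prop))] at hcompl
  linarith

lemma integrable_of_summable (hmeas : ∀ i, Measurable (X i)) (hindep : iIndepFun X ℙ)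
    (hident : ∀ i, IdentDistrib (X i) (X 0) ℙ ℙ)
    (h : Summable fun n : ℕ => 1 / ((n : ℝ) + 1) *
      (ℙ).real {ω | 1 / 3 * ((n : ℝ) + 1) < |∑ i ∈ Finset.range (n + 1), X i ω|}) :
    Integrable (X 0) := by
  set p : ℕ → ℝ := fun n => (ℙ).real {ω | (n : ℝ) < |X 0 ω|}
  have hp : Antitone p := fun m n hmn => measureReal_mono fun ω (hω : (n : ℝ) < _) =>
    (Nat.cast_le.2 hmn).trans_lt hω
  have hq : ∀ᶠ n : ℕ in atTop, (ℙ).real {ω | ((n + 1 : ℕ) : ℝ) / 3 < |X 0 ω|} ≤ 1 / 8 :=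
    ((tendsto_measureReal_lt_abs_atTop (hmeas 0)).comp
      ((tendsto_natCast_atTop_atTop.comp (tendsto_add_atTop_nat 1)).atTop_div_const
        (by norm_num : (0 : ℝ) < 3))).eventually (eventually_le_nhds (by norm_num))
  have hmin : Summable fun n : ℕ => min (1 / 8 / (n : ℝ)) (p n) := by
    refine (summable_nat_add_iff 1).1 ((h.mul_left 2).of_norm_bounded_eventually_nat ?_)
    filter_upwards [hq] with n hn
    have hpq : p (n + 1) ≤ (ℙ).real {ω | ((n + 1 : ℕ) : ℝ) / 3 < |X 0 ω|} :=
      measureReal_mono fun ω (hω : ((n + 1 : ℕ) : ℝ) < |X 0 ω|) => by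
        show ((n + 1 : ℕ) : ℝ) / 3 < |X 0 ω|
        linarith [((n + 1).cast_nonneg : (0 : ℝ) ≤ (n + 1 : ℕ))]
    have key := min_eighth_mul_le_two_mul (n := n + 1) le_add_self measureReal_nonneg hpq hn
      measureReal_nonneg fun K _ hK =>
        natCast_mul_measureReal_lt_abs_le hmeas hindep hident ((n + 1 : ℕ) : ℝ) hK
    have hn1 : (0 : ℝ) < (n + 1 : ℕ) := by positivity
    rw [Real.norm_of_nonneg (le_min (by positivity) measureReal_nonneg)]
    calc min (1 / 8 / ((n + 1 : ℕ) : ℝ)) (p (n + 1))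
        = min (1 / 8) ((n + 1 : ℕ) * p (n + 1)) / (n + 1 : ℕ) := by
          rw [← min_div_div_right hn1.le, mul_div_cancel_left₀ _ hn1.ne']
      _ ≤ 2 * (ℙ).real {ω | ((n + 1 : ℕ) : ℝ) / 3 < |∑ i ∈ Finset.range (n + 1), X i ω|} /
            (n + 1 : ℕ) :=
          div_le_div_of_nonneg_right key hn1.le
      _ = _ := by
          simp only [Nat.cast_add_one, one_div_mul_eq_div]
          ring
  exact (summable_measureReal_lt_abs_iff (hmeas 0)).1
    (summable_of_summable_min_div (by norm_num) (fun n => measureReal_nonneg) hp hmin)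

end Spitzer

end Probability

theorem stmt_18 {Ω : Type*} [MeasureSpace Ω] [IsProbabilityMeasure (ℙ : Measure Ω)]
    (X : ℕ → Ω → ℝ) (hmeas : ∀ i, Measurable (X i))
    (hindep : iIndepFun X (ℙ : Measure Ω))
    (hident : ∀ i, IdentDistrib (X i) (X 0) (ℙ : Measure Ω) (ℙ : Measure Ω)) :
    (∀ ε : ℝ, 0 < ε →
      Summable (fun n : ℕ =>
        (1 / ((n : ℝ) + 1)) *
          (ℙ {ω | ε * ((n : ℝ) + 1) < |∑ i ∈ Finset.range (n + 1), X i ω|}).toReal)) ↔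
      (Integrable (X 0) (ℙ : Measure Ω) ∧ (∫ ω, X 0 ω ∂(ℙ : Measure Ω)) = 0) := by
  refine ⟨fun h => ?_, fun ⟨hint, hzero⟩ ε hε =>
    Spitzer.summable_of_integrable_of_integral_eq_zero hmeas hindep hident hint hzero hε⟩
  have hint := Spitzer.integrable_of_summable hmeas hindep hident (h (1 / 3) (by norm_num))
  exact ⟨hint, Spitzer.integral_eq_zero_of_summable hmeas hindep hident hint h⟩
end
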